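/- arXiv:2301.02003 — 8 statements merged into one kernel-verified Lean document; each statement's English description precedes it below -/
import Mathlib

section
/- Let $D$ be a finite set, and for each $x,y \in D$ let $E_{xy}$ and $\Delta_{xy}$ be linear operators on finite-dimensional complex inner product spaces $\mathcal{K}$ and $\mathcal{M}$ respectively, satisfying $E_{xy} = E_{yx}^*$ and $\Delta_{xy} = \Delta_{yx}^*$. Suppose there exist a finite-dimensional space $\mathcal{W}$ and linear maps $V_x : \mathcal{K} \to \mathcal{M} \otimes \mathcal{W}$ with $E_{xy} = V_x^* (\Delta_{xy} \otimes I_{\mathcal{W}}) V_y$ for all $x,y \in D$. Then for every Hermitian $D \times D$ matrix $\Gamma$ with $\lambda_{\max}(\Gamma \circ \Delta) \le 1$, one has $\lambda_{\max}(\Gamma \circ E) \le \max_{x \in D} \|V_x\|^2$. -/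
open Matrix
open scoped Kronecker

/-- Largest eigenvalue of a (Hermitian) matrix, as the supremum of the (real part of the)
quadratic form over unit vectors. -/
noncomputable def lamMax {ι : Type*} [Fintype ι] (A : Matrix ι ι ℂ) : ℝ :=
  ⨆ v : {v : ι → ℂ // ∑ i, ‖v i‖ ^ 2 = 1}, (star v.1 ⬝ᵥ A.mulVec v.1).re

/-- Squared operator (spectral) norm of a matrix: the supremum of `‖A v‖²` over
unit vectors `v`. -/
noncomputable def opNormSq {ι κ : Type*} [Fintype ι] [Fintype κ] (A : Matrix ι κ ℂ) : ℝ :=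
  ⨆ v : {v : κ → ℂ // ∑ j, ‖v j‖ ^ 2 = 1}, ∑ i, ‖A.mulVec v.1 i‖ ^ 2

lemma unit_entry_le {ι : Type*} [Fintype ι] (v : {v : ι → ℂ // ∑ i, ‖v i‖ ^ 2 = 1})
    (i : ι) : ‖v.1 i‖ ≤ 1 := by
  have h2 : ‖v.1 i‖ ^ 2 ≤ 1 := by
    conv_rhs => rw [← v.2]
    exact Finset.single_le_sum (f := fun j => ‖v.1 j‖ ^ 2) (fun j _ => by positivity) (Finset.mem_univ i)
  nlinarith [norm_nonneg (v.1 i)]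

lemma mulVec_entry_le {ι κ : Type*} [Fintype ι] [Fintype κ] (A : Matrix ι κ ℂ)
    (v : {v : κ → ℂ // ∑ j, ‖v j‖ ^ 2 = 1}) (i : ι) :
    ‖A.mulVec v.1 i‖ ≤ ∑ j, ‖A i j‖ := by
  refine (norm_sum_le _ _).trans (Finset.sum_le_sum fun j _ => ?_)
  rw [norm_mul]
  exact mul_le_of_le_one_right (norm_nonneg _) (unit_entry_le v j)

lemma quad_bdd {ι : Type*} [Fintype ι] (A : Matrix ι ι ℂ) :
    BddAbove (Set.range fun v : {v : ι → ℂ // ∑ i, ‖v i‖ ^ 2 = 1} =>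
      (star v.1 ⬝ᵥ A.mulVec v.1).re) := by
  refine ⟨∑ i, ∑ j, ‖A i j‖, ?_⟩
  rintro _ ⟨v, rfl⟩
  refine (Complex.re_le_norm _).trans ?_
  rw [dotProduct]
  refine (norm_sum_le _ _).trans (Finset.sum_le_sum fun i _ => ?_)
  rw [norm_mul, Pi.star_apply, norm_star]
  exact mul_le_of_le_one_left (by positivity) (unit_entry_le v i) |>.trans
    (by exact le_trans (mulVec_entry_le A v i) le_rfl)

lemma sq_bdd {ι κ : Type*} [Fintype ι] [Fintype κ] (A : Matrix ι κ ℂ) :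
    BddAbove (Set.range fun v : {v : κ → ℂ // ∑ j, ‖v j‖ ^ 2 = 1} =>
      ∑ i, ‖A.mulVec v.1 i‖ ^ 2) := by
  refine ⟨∑ i, (∑ j, ‖A i j‖) ^ 2, ?_⟩
  rintro _ ⟨v, rfl⟩
  refine Finset.sum_le_sum fun i _ => ?_
  have := mulVec_entry_le A v i
  nlinarith [norm_nonneg (A.mulVec v.1 i)]

lemma opNormSq_nonneg {ι κ : Type*} [Fintype ι] [Fintype κ] (A : Matrix ι κ ℂ) :
    0 ≤ opNormSq A := by
  rcases isEmpty_or_nonempty {v : κ → ℂ // ∑ j, ‖v j‖ ^ 2 = 1} with h | hne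
  · rw [opNormSq, Real.iSup_of_isEmpty]
  · obtain ⟨v⟩ := hne
    exact le_trans (by positivity) (le_ciSup (sq_bdd A) v)

lemma quad_le_lamMax {ι : Type*} [Fintype ι] (A : Matrix ι ι ℂ) (u : ι → ℂ) :
    (star u ⬝ᵥ A.mulVec u).re ≤ lamMax A * ∑ i, ‖u i‖ ^ 2 := by
  set s := ∑ i, ‖u i‖ ^ 2 with hs
  have hs0 : 0 ≤ s := by positivity
  rcases eq_or_lt_of_le hs0 with h0 | hpos
  · have hu : u = 0 := by
      funext i
      have h1 : ‖u i‖ ^ 2 ≤ 0 := by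
        rw [h0, hs]
        exact Finset.single_le_sum (f := fun j => ‖u j‖ ^ 2)
          (fun j _ => by positivity) (Finset.mem_univ i)
      have : ‖u i‖ = 0 := by nlinarith [norm_nonneg (u i)]
      simpa using this
    simp [hu, ← h0]
  · set c := Real.sqrt s with hcdef
    have hc : (0:ℝ) < c := Real.sqrt_pos.2 hpos
    set v := (c:ℂ)⁻¹ • u with hvdef
    have hv : ∑ i, ‖v i‖ ^ 2 = 1 := by
      simp only [hvdef, Pi.smul_apply, norm_smul, mul_pow, norm_inv, Complex.norm_real,
        Real.norm_eq_abs, abs_of_pos hc]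
      rw [← Finset.mul_sum, ← hs, hcdef, inv_pow, Real.sq_sqrt hpos.le,
        inv_mul_cancel₀ hpos.ne']
    have key : star v ⬝ᵥ A.mulVec v = ((c:ℂ)^2)⁻¹ * (star u ⬝ᵥ A.mulVec u) := by
      rw [hvdef, Matrix.mulVec_smul, star_smul, smul_dotProduct, dotProduct_smul,
        star_inv₀]
      simp [Complex.star_def, Complex.conj_ofReal, smul_smul]
      ring
    have hle : (star v ⬝ᵥ A.mulVec v).re ≤ lamMax A := le_ciSup (quad_bdd A) ⟨v, hv⟩
    have hre : (star v ⬝ᵥ A.mulVec v).re = s⁻¹ * (star u ⬝ᵥ A.mulVec u).re := by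
      rw [key]
      have h2 : ((c:ℂ)^2) = ((s:ℝ):ℂ) := by
        norm_cast
        rw [hcdef, Real.sq_sqrt hpos.le]
      rw [h2, ← Complex.ofReal_inv, Complex.re_ofReal_mul]
    rw [hre] at hle
    calc (star u ⬝ᵥ A.mulVec u).re = s * (s⁻¹ * (star u ⬝ᵥ A.mulVec u).re) := by
          field_simp
      _ ≤ s * lamMax A := by
          exact mul_le_mul_of_nonneg_left hle hpos.le
      _ = lamMax A * s := mul_comm _ _

lemma mulVec_sq_le {ι κ : Type*} [Fintype ι] [Fintype κ] (A : Matrix ι κ ℂ) (u : κ → ℂ) :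
    ∑ i, ‖A.mulVec u i‖ ^ 2 ≤ opNormSq A * ∑ j, ‖u j‖ ^ 2 := by
  set s := ∑ j, ‖u j‖ ^ 2 with hs
  have hs0 : 0 ≤ s := by positivity
  rcases eq_or_lt_of_le hs0 with h0 | hpos
  · have hu : u = 0 := by
      funext j
      have h1 : ‖u j‖ ^ 2 ≤ 0 := by
        rw [h0, hs]
        exact Finset.single_le_sum (f := fun i => ‖u i‖ ^ 2)
          (fun i _ => by positivity) (Finset.mem_univ j)
      have : ‖u j‖ = 0 := by nlinarith [norm_nonneg (u j)]
      simpa using this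
    simp [hu, ← h0]
  · set c := Real.sqrt s with hcdef
    have hc : (0:ℝ) < c := Real.sqrt_pos.2 hpos
    set v := (c:ℂ)⁻¹ • u with hvdef
    have hv : ∑ j, ‖v j‖ ^ 2 = 1 := by
      simp only [hvdef, Pi.smul_apply, norm_smul, mul_pow, norm_inv, Complex.norm_real,
        Real.norm_eq_abs, abs_of_pos hc]
      rw [← Finset.mul_sum, ← hs, hcdef, inv_pow, Real.sq_sqrt hpos.le,
        inv_mul_cancel₀ hpos.ne']
    have key : ∑ i, ‖A.mulVec v i‖ ^ 2 = s⁻¹ * ∑ i, ‖A.mulVec u i‖ ^ 2 := by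
      rw [Matrix.mulVec_smul]
      simp only [Pi.smul_apply, norm_smul, mul_pow, norm_inv, Complex.norm_real,
        Real.norm_eq_abs, abs_of_pos hc]
      rw [← Finset.mul_sum, hcdef, inv_pow, Real.sq_sqrt hpos.le]
    have hle : ∑ i, ‖A.mulVec v i‖ ^ 2 ≤ opNormSq A := le_ciSup (sq_bdd A) ⟨v, hv⟩
    rw [key] at hle
    calc ∑ i, ‖A.mulVec u i‖ ^ 2 = s * (s⁻¹ * ∑ i, ‖A.mulVec u i‖ ^ 2) := by
          field_simp
      _ ≤ s * opNormSq A := mul_le_mul_of_nonneg_left hle hpos.le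
      _ = opNormSq A * s := mul_comm _ _

lemma kron_quad {m w : ℕ} (Δ : Matrix (Fin m) (Fin m) ℂ) (u u' : Fin m × Fin w → ℂ) :
    star u ⬝ᵥ (Δ ⊗ₖ (1 : Matrix (Fin w) (Fin w) ℂ)).mulVec u'
      = ∑ j, ∑ i, ∑ i', star (u (i, j)) * (Δ i i' * u' (i', j)) := by
  simp only [dotProduct, mulVec, Matrix.kroneckerMap_apply, Fintype.sum_prod_type,
    Pi.star_apply, Matrix.one_apply, mul_ite, mul_one, mul_zero, ite_mul, zero_mul,
    Finset.sum_ite_eq, Finset.mem_univ, if_true, dotProduct]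
  rw [Finset.sum_comm]
  congr 1; funext j
  congr 1; funext i
  simp [Finset.mul_sum, Finset.sum_ite_eq, mul_comm, mul_assoc, mul_left_comm]

lemma sandwich_quad {k m w : ℕ} (A C : Matrix (Fin m × Fin w) (Fin k) ℂ)
    (B : Matrix (Fin m × Fin w) (Fin m × Fin w) ℂ) (z z' : Fin k → ℂ) :
    star z ⬝ᵥ (Aᴴ * (B * C)).mulVec z' = star (A.mulVec z) ⬝ᵥ B.mulVec (C.mulVec z') := by
  rw [← Matrix.mulVec_mulVec, ← Matrix.mulVec_mulVec, Matrix.dotProduct_mulVec (star z),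
    ← Matrix.star_mulVec]


/-- Weak duality for the unidirectional relative γ₂-bound: if
`E x y = (V x)* (Δ x y ⊗ I_W) (V y)` for all `x, y ∈ D`, then for every Hermitian `Γ`
with `λ_max(Γ ∘ Δ) ≤ 1` one has `λ_max(Γ ∘ E) ≤ max_x ‖V x‖²`. -/
theorem weak_duality_onegamma
    {D : Type*} [Fintype D] [DecidableEq D] [Nonempty D]
    (k m w : ℕ)
    (E : D → D → Matrix (Fin k) (Fin k) ℂ)
    (Δ : D → D → Matrix (Fin m) (Fin m) ℂ)
    (hE : ∀ x y, E x y = (E y x)ᴴ)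
    (hΔ : ∀ x y, Δ x y = (Δ y x)ᴴ)
    (V : D → Matrix (Fin m × Fin w) (Fin k) ℂ)
    (hV : ∀ x y, E x y = (V x)ᴴ * ((Δ x y ⊗ₖ (1 : Matrix (Fin w) (Fin w) ℂ)) * V y))
    (Γ : Matrix D D ℂ) (hΓ : Γ.IsHermitian)
    (hbound : lamMax (Matrix.of fun p q : D × Fin m => Γ p.1 q.1 * Δ p.1 q.1 p.2 q.2) ≤ 1) :
    lamMax (Matrix.of fun p q : D × Fin k => Γ p.1 q.1 * E p.1 q.1 p.2 q.2)
      ≤ ⨆ x : D, opNormSq (V x) := by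
  set S := ⨆ x : D, opNormSq (V x) with hSdef
  have hSb : BddAbove (Set.range fun x : D => opNormSq (V x)) :=
    Set.Finite.bddAbove (Set.finite_range _)
  have hSle : ∀ x, opNormSq (V x) ≤ S := fun x => le_ciSup hSb x
  have hS0 : 0 ≤ S := le_trans (opNormSq_nonneg (V (Classical.arbitrary D)))
    (hSle (Classical.arbitrary D))
  set N := (Matrix.of fun p q : D × Fin m => Γ p.1 q.1 * Δ p.1 q.1 p.2 q.2) with hNdef
  set M := (Matrix.of fun p q : D × Fin k => Γ p.1 q.1 * E p.1 q.1 p.2 q.2) with hMdef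
  rcases isEmpty_or_nonempty {v : D × Fin k → ℂ // ∑ i, ‖v i‖ ^ 2 = 1} with he | hne
  · rw [lamMax, Real.iSup_of_isEmpty]; exact hS0
  · refine ciSup_le fun v => ?_
    set vx : D → Fin k → ℂ := fun x a => v.1 (x, a) with hvx
    set u : D → Fin m × Fin w → ℂ := fun x => (V x).mulVec (vx x) with hu
    set wj : Fin w → (D × Fin m → ℂ) := fun j p => u p.1 (p.2, j) with hwj
    -- Identity 1
    have id1 : star v.1 ⬝ᵥ M.mulVec v.1
        = ∑ x, ∑ y, Γ x y * (star (vx x) ⬝ᵥ (E x y).mulVec (vx y)) := by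
      simp only [hMdef, dotProduct, mulVec, Matrix.of_apply, Fintype.sum_prod_type,
        Pi.star_apply, Finset.mul_sum]
      refine Finset.sum_congr rfl fun x _ => ?_
      rw [Finset.sum_comm]
      refine Finset.sum_congr rfl fun y _ => ?_
      refine Finset.sum_congr rfl fun a _ => ?_
      refine Finset.sum_congr rfl fun b _ => ?_
      simp [hvx]; ring
    -- Identity 2
    have id2 : ∀ x y, star (vx x) ⬝ᵥ (E x y).mulVec (vx y)
        = ∑ j, ∑ i, ∑ i', star (u x (i, j)) * (Δ x y i i' * u y (i', j)) := by
      intro x y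
      rw [hV x y, sandwich_quad, kron_quad]
    -- Identity 3
    have id3 : star v.1 ⬝ᵥ M.mulVec v.1 = ∑ j, star (wj j) ⬝ᵥ N.mulVec (wj j) := by
      rw [id1]
      simp only [id2]
      simp only [hNdef, dotProduct, mulVec, Matrix.of_apply, Fintype.sum_prod_type,
        Pi.star_apply, Finset.mul_sum, hwj]
      have step : ∀ x : D,
          (∑ y : D, ∑ j : Fin w, ∑ i : Fin m, ∑ i' : Fin m,
            Γ x y * (star (u x (i, j)) * (Δ x y i i' * u y (i', j))))
          = ∑ j : Fin w, ∑ i : Fin m, ∑ y : D, ∑ i' : Fin m,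
            star (u x (i, j)) * (Γ x y * Δ x y i i' * u y (i', j)) := by
        intro x
        rw [Finset.sum_comm]
        refine Finset.sum_congr rfl fun j _ => ?_
        rw [Finset.sum_comm]
        exact Finset.sum_congr rfl fun i _ => Finset.sum_congr rfl fun y _ =>
          Finset.sum_congr rfl fun i' _ => by ring
      simp only [step]
      rw [Finset.sum_comm]
    -- Bound
    rw [id3]
    have hterm : ∀ j, (star (wj j) ⬝ᵥ N.mulVec (wj j)).re ≤ ∑ p, ‖wj j p‖ ^ 2 := by
      intro j
      refine le_trans (quad_le_lamMax N (wj j)) ?_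
      have hnn : (0:ℝ) ≤ ∑ p, ‖wj j p‖ ^ 2 := by positivity
      nlinarith [hbound]
    have hsum : ∑ j, ∑ p : D × Fin m, ‖wj j p‖ ^ 2 ≤ S := by
      have hre : ∑ j, ∑ p : D × Fin m, ‖wj j p‖ ^ 2
          = ∑ x, ∑ q : Fin m × Fin w, ‖u x q‖ ^ 2 := by
        simp only [Fintype.sum_prod_type, hwj]
        rw [Finset.sum_comm]
        exact Finset.sum_congr rfl fun x _ => Finset.sum_comm
      rw [hre]
      have hx : ∀ x, ∑ q : Fin m × Fin w, ‖u x q‖ ^ 2 ≤ S * ∑ a, ‖vx x a‖ ^ 2 := by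
        intro x
        refine le_trans (mulVec_sq_le (V x) (vx x)) ?_
        have : (0:ℝ) ≤ ∑ a, ‖vx x a‖ ^ 2 := by positivity
        exact mul_le_mul_of_nonneg_right (hSle x) this
      refine le_trans (Finset.sum_le_sum fun x _ => hx x) ?_
      rw [← Finset.mul_sum]
      have h1 : ∑ x, ∑ a, ‖vx x a‖ ^ 2 = 1 := by
        rw [← v.2, Fintype.sum_prod_type]
      rw [h1, mul_one]
    calc (∑ j, star (wj j) ⬝ᵥ N.mulVec (wj j)).re
        = ∑ j, (star (wj j) ⬝ᵥ N.mulVec (wj j)).re := by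
          rw [Complex.re_sum]
      _ ≤ ∑ j, ∑ p : D × Fin m, ‖wj j p‖ ^ 2 := Finset.sum_le_sum fun j _ => hterm j
      _ ≤ S := hsum
end

section
/- Let $\mathfrak{C}_n$ be the set of $n$-cycles in the symmetric group $S_n$, and define the relation $\pi \leftrightsquigarrow \sigma$ to hold when $\sigma$ is obtained from $\pi$ by cutting the cycle of $\pi$ starting at $1$ into three nonempty arcs (the first containing $1$) and swapping the last two arcs. Define the $\mathfrak{C}_n \times \mathfrak{C}_n$ matrix $\Gamma$ by $\Gamma[\pi,\sigma] = 1$ if $\pi \leftrightsquigarrow \sigma$ and $0$ otherwise. Then $\Gamma$ is symmetric. -/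
/-!
If `σ` is obtained from the cycle `p₁ … pₙ` of `π` by cutting after positions `k < ℓ`, its cycle
reads `p₁ … p_k, p_{ℓ+1} … pₙ, p_{k+1} … p_ℓ`. Cutting this word after positions `k` and
`k + n - ℓ` and swapping the last two arcs gives back `p₁ … pₙ`, so `σ ⟷ π`.
-/

open Matrix

/-- `π` is an `n`-cycle: a cycle whose support is all of `Fin n`. -/
def IsNCycle {n : ℕ} (π : Equiv.Perm (Fin n)) : Prop :=
  π.IsCycle ∧ π.support = Finset.univ

/-- The suffix-shift relation with explicit cut points `k < ℓ`.  Writing the cycle of `π`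
as `p 1 = 0, p 2, …, p n` with `p i = π^(i-1) 0`, the permutation `σ` maps
`p i ↦ p (i+1)` for `i ∉ {k, ℓ, n}`, while `p k ↦ p (ℓ+1)`, `p ℓ ↦ p 1` and
`p n ↦ p (k+1)`; i.e. the suffix `p (k+1), …, p n` of the cycle is cyclically shifted. -/
def shiftRelAt {n : ℕ} [NeZero n] (π σ : Equiv.Perm (Fin n)) (k ℓ : ℕ) : Prop :=
  1 ≤ k ∧ k < ℓ ∧ ℓ < n ∧
  (∀ i, 1 ≤ i → i < n → i ≠ k → i ≠ ℓ →
      σ ((π ^ (i - 1)) (0 : Fin n)) = (π ^ i) (0 : Fin n)) ∧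
  σ ((π ^ (k - 1)) (0 : Fin n)) = (π ^ ℓ) (0 : Fin n) ∧
  σ ((π ^ (ℓ - 1)) (0 : Fin n)) = (0 : Fin n) ∧
  σ ((π ^ (n - 1)) (0 : Fin n)) = (π ^ k) (0 : Fin n)

/-- The suffix-shift relation `π ⟷ σ` on `n`-cycles. -/
def shiftRel {n : ℕ} [NeZero n] (π σ : Equiv.Perm (Fin n)) : Prop :=
  ∃ k ℓ : ℕ, shiftRelAt π σ k ℓ

attribute [local instance] Classical.propDecidable

/-- The adversary matrix `Γ` on `n`-cycles: `Γ[π, σ] = 1` if `π ⟷ σ` and `0` otherwise. -/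
noncomputable def gammaMat (n : ℕ) [NeZero n] :
    Matrix {π : Equiv.Perm (Fin n) // IsNCycle π} {π : Equiv.Perm (Fin n) // IsNCycle π} ℝ :=
  Matrix.of fun π σ => if shiftRel π.1 σ.1 then 1 else 0

lemma IsNCycle.pow_eq_one {n : ℕ} {π : Equiv.Perm (Fin n)} (h : IsNCycle π) : π ^ n = 1 := by
  have horder := h.1.orderOf
  rw [h.2, Finset.card_univ, Fintype.card_fin] at horder
  have := pow_orderOf_eq_one π
  rwa [horder] at this

lemma Equiv.Perm.pow_apply_eq_of_apply_eq_succ {α : Type*} {σ : Equiv.Perm α} {f : ℕ → α}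
    {m : ℕ} (h : ∀ j < m, σ (f j) = f (j + 1)) : ∀ j ≤ m, (σ ^ j) (f 0) = f j := by
  intro j hj
  induction j with
  | zero => rfl
  | succ j ih => rw [pow_succ', Equiv.Perm.mul_apply, ih (by omega), h j (by omega)]

/-- When `σ` arises from `π` by cutting at `k < ℓ`, `σ ^ j 0 = π ^ (cutSwapIndex n k ℓ j) 0`
for `j < n`: the exponents run through `0, …, k-1`, then `ℓ, …, n-1`, then `k, …, ℓ-1`. -/
def cutSwapIndex (n k ℓ j : ℕ) : ℕ :=
  if j < k then j else if j < k + n - ℓ then j + ℓ - k else j + ℓ - n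

lemma shiftRelAt.pow_apply_zero {n : ℕ} [NeZero n] {π σ : Equiv.Perm (Fin n)} {k ℓ : ℕ}
    (h : shiftRelAt π σ k ℓ) :
    ∀ j < n, (σ ^ j) (0 : Fin n) = (π ^ cutSwapIndex n k ℓ j) (0 : Fin n) := by
  obtain ⟨hk, hkℓ, hℓn, hsucc, hcutk, -, hcutn⟩ := h
  have hstep : ∀ j < n - 1,
      σ ((π ^ cutSwapIndex n k ℓ j) 0) = (π ^ cutSwapIndex n k ℓ (j + 1)) 0 := by
    intro j hj
    by_cases hjk : j + 1 = k
    · have e₀ : cutSwapIndex n k ℓ j = k - 1 := by unfold cutSwapIndex; split_ifs <;> omega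
      have e₁ : cutSwapIndex n k ℓ (j + 1) = ℓ := by unfold cutSwapIndex; split_ifs <;> omega
      rw [e₀, e₁, hcutk]
    by_cases hjℓ : j + 1 = k + n - ℓ
    · have e₀ : cutSwapIndex n k ℓ j = n - 1 := by unfold cutSwapIndex; split_ifs <;> omega
      have e₁ : cutSwapIndex n k ℓ (j + 1) = k := by unfold cutSwapIndex; split_ifs <;> omega
      rw [e₀, e₁, hcutn]
    set a := cutSwapIndex n k ℓ j with ha
    have ha_succ : cutSwapIndex n k ℓ (j + 1) = a + 1 ∧ a + 1 < n ∧ a + 1 ≠ k ∧ a + 1 ≠ ℓ := by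
      unfold cutSwapIndex at ha ⊢; split_ifs at ha ⊢ <;> omega
    obtain ⟨e₁, ha_lt, ha_ne_k, ha_ne_ℓ⟩ := ha_succ
    simpa [e₁] using hsucc (a + 1) (by omega) ha_lt ha_ne_k ha_ne_ℓ
  intro j hj
  have := Equiv.Perm.pow_apply_eq_of_apply_eq_succ hstep j (by omega)
  rwa [show cutSwapIndex n k ℓ 0 = 0 by unfold cutSwapIndex; split_ifs <;> omega, pow_zero] at this

lemma shiftRelAt.symm {n : ℕ} [NeZero n] {π σ : Equiv.Perm (Fin n)} (hπ : π ^ n = 1)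
    {k ℓ : ℕ} (h : shiftRelAt π σ k ℓ) : shiftRelAt σ π k (k + n - ℓ) := by
  have hσ := h.pow_apply_zero
  obtain ⟨hk, hkℓ, hℓn, -⟩ := h
  have hπ_succ : ∀ a, π ((π ^ a) (0 : Fin n)) = (π ^ (a + 1)) 0 := fun a => by
    rw [pow_succ', Equiv.Perm.mul_apply]
  refine ⟨hk, by omega, by omega, fun i hi hin hik hiℓ => ?_, ?_, ?_, ?_⟩
  · rw [hσ _ (by omega), hσ _ hin, hπ_succ]
    congr 2
    unfold cutSwapIndex; split_ifs <;> omega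
  · rw [hσ _ (by omega), hσ _ (by omega), hπ_succ]
    congr 2
    unfold cutSwapIndex; split_ifs <;> omega
  · have e : cutSwapIndex n k ℓ (k + n - ℓ - 1) + 1 = n := by
      unfold cutSwapIndex; split_ifs <;> omega
    rw [hσ _ (by omega), hπ_succ, e, hπ, Equiv.Perm.one_apply]
  · rw [hσ _ (by omega), hσ _ (by omega), hπ_succ]
    congr 2
    unfold cutSwapIndex; split_ifs <;> omega

lemma shiftRel.symm {n : ℕ} [NeZero n] {π σ : Equiv.Perm (Fin n)} (hπ : π ^ n = 1)
    (h : shiftRel π σ) : shiftRel σ π :=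
  let ⟨k, ℓ, h⟩ := h
  ⟨k, k + n - ℓ, h.symm hπ⟩

/-- The adversary matrix `Γ` of the suffix-shift relation on `n`-cycles is symmetric. -/
theorem gammaMat_symm (n : ℕ) [NeZero n] : (gammaMat n)ᵀ = gammaMat n := by
  ext π σ
  have hiff : shiftRel σ.1 π.1 ↔ shiftRel π.1 σ.1 :=
    ⟨(·.symm σ.2.pow_eq_one), (·.symm π.2.pow_eq_one)⟩
  simp only [transpose_apply, gammaMat, Matrix.of_apply, hiff]
end

section
/- With $\Gamma$ the adjacency matrix of $\leftrightsquigarrow$ on $n$-cycles as above, the matrix $(n-2)I + \Gamma$ is positive semidefinite; equivalently, $\lambda_{\min}(\Gamma) \ge -(n-2)$. -/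
open Matrix

attribute [local instance] Classical.propDecidable

namespace ShiftAux
set_option linter.unusedSectionVars false

variable {n : ℕ} [NeZero n]

def w (π : Equiv.Perm (Fin n)) (i : ℕ) : Fin n := (π ^ i) (0 : Fin n)

lemma w_zero (π : Equiv.Perm (Fin n)) : w π 0 = 0 := by
  simp [w]

lemma w_succ (π : Equiv.Perm (Fin n)) (i : ℕ) : w π (i + 1) = π (w π i) := by
  simp only [w, pow_succ', Equiv.Perm.mul_apply]

lemma ncycle_orderOf {π : Equiv.Perm (Fin n)} (h : IsNCycle π) : orderOf π = n := by
  rw [h.1.orderOf, h.2, Finset.card_univ, Fintype.card_fin]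

lemma ncycle_pow_n {π : Equiv.Perm (Fin n)} (h : IsNCycle π) : π ^ n = 1 := by
  have := pow_orderOf_eq_one π
  rwa [ncycle_orderOf h] at this

lemma w_n {π : Equiv.Perm (Fin n)} (h : IsNCycle π) : w π n = 0 := by
  rw [w, ncycle_pow_n h]; rfl

lemma ncycle_moves {π : Equiv.Perm (Fin n)} (h : IsNCycle π) (x : Fin n) : π x ≠ x :=
  Equiv.Perm.mem_support.mp (by rw [h.2]; exact Finset.mem_univ x)

lemma w_inj {π : Equiv.Perm (Fin n)} (h : IsNCycle π) {i j : ℕ}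
    (hi : i < n) (hj : j < n) (hw : w π i = w π j) : i = j := by
  wlog hij : i ≤ j generalizing i j
  · exact (this hj hi hw.symm (by omega)).symm
  have h1 : (π ^ (j - i)) (w π i) = w π i := by
    rw [w, ← Equiv.Perm.mul_apply, ← pow_add, Nat.sub_add_cancel hij]
    exact hw.symm
  have h2 : π ^ (j - i) = 1 := (h.1.pow_eq_one_iff' (ncycle_moves h (w π i))).mpr h1
  have h3 : n ∣ j - i := ncycle_orderOf h ▸ orderOf_dvd_of_pow_eq_one h2
  have h4 : j - i = 0 := Nat.eq_zero_of_dvd_of_lt h3 (by omega)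
  omega

lemma w_surj {π : Equiv.Perm (Fin n)} (h : IsNCycle π) (y : Fin n) :
    ∃ i, i < n ∧ w π i = y := by
  obtain ⟨i, hi⟩ := h.1.exists_pow_eq (ncycle_moves h 0) (ncycle_moves h y)
  refine ⟨i % n, Nat.mod_lt _ (Nat.pos_of_ne_zero (NeZero.ne n)), ?_⟩
  have hp : π ^ i = π ^ (i % n) := by
    conv_lhs => rw [← Nat.div_add_mod i n]
    rw [pow_add, pow_mul, ncycle_pow_n h, one_pow, one_mul]
  rw [w, ← hp]; exact hi

lemma eq_of_word_eq {π σ : Equiv.Perm (Fin n)} (hπ : IsNCycle π) (hσ : IsNCycle σ)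
    (hw : ∀ i, i < n → w σ i = w π i) : σ = π := by
  apply Equiv.ext
  intro x
  obtain ⟨i, hi, rfl⟩ := w_surj hπ x
  have h1 : σ (w π i) = w σ (i + 1) := by rw [w_succ, hw i hi]
  have h2 : π (w π i) = w π (i + 1) := (w_succ π i).symm
  rw [h1, h2]
  rcases Nat.lt_or_ge (i + 1) n with h3 | h3
  · exact hw _ h3
  · have hn : i + 1 = n := by omega
    rw [hn, w_n hπ, w_n hσ]

lemma mod_helper {m d e : ℕ} (hd : d < m) (he : e < m) :
    (d + e) % m = if d + e < m then d + e else d + e - m := by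
  split_ifs with h
  · exact Nat.mod_eq_of_lt h
  · rw [Nat.mod_eq_sub_mod (by omega), Nat.mod_eq_of_lt (by omega)]

/-- Same length-`k` prefix and the suffix is shifted cyclically by `s`. -/
def Rel (n k : ℕ) [NeZero n] (π σ : Equiv.Perm (Fin n)) : Prop :=
  (∀ i, i < k → w σ i = w π i) ∧
    ∃ s, s < n - k ∧ ∀ j, j < n - k → w σ (k + j) = w π (k + (j + s) % (n - k))

lemma Rel.refl (k : ℕ) (hk : k < n) (π : Equiv.Perm (Fin n)) : Rel n k π π :=
  ⟨fun _ _ => rfl, 0, by omega, fun j hj => by rw [Nat.add_zero, Nat.mod_eq_of_lt hj]⟩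

lemma Rel.symm {k : ℕ} {π σ : Equiv.Perm (Fin n)} (h : Rel n k π σ) : Rel n k σ π := by
  obtain ⟨h1, s, hs, h2⟩ := h
  set m := n - k with hm
  rcases Nat.eq_zero_or_pos s with rfl | hspos
  · refine ⟨fun i hi => (h1 i hi).symm, 0, hs, fun j hj => ?_⟩
    have h3 := h2 j hj
    rw [Nat.add_zero, Nat.mod_eq_of_lt hj] at h3 ⊢
    exact h3.symm
  · refine ⟨fun i hi => (h1 i hi).symm, m - s, by omega, fun j hj => ?_⟩
    have hj' : (j + (m - s)) % m < m := Nat.mod_lt _ (by omega)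
    have h3 := h2 _ hj'
    rw [h3]
    congr 1
    rw [mod_helper (show j < m by omega) (show m - s < m by omega)]
    split_ifs with hcase
    · rw [mod_helper (by omega) (show s < m by omega)]
      split_ifs with h2c <;> omega
    · rw [show j + (m - s) - m + s = j from by omega, Nat.mod_eq_of_lt (by omega)]

lemma Rel.trans {k : ℕ} {π σ τ : Equiv.Perm (Fin n)} (hab : Rel n k π σ) (hbc : Rel n k σ τ) :
    Rel n k π τ := by
  obtain ⟨h1, s, hs, h2⟩ := hab
  obtain ⟨g1, t, ht, g2⟩ := hbc
  set m := n - k with hm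
  refine ⟨fun i hi => (g1 i hi).trans (h1 i hi), (t + s) % m, Nat.mod_lt _ (by omega),
    fun j hj => ?_⟩
  have e1 := g2 j hj
  have e2 := h2 ((j + t) % m) (Nat.mod_lt _ (by omega))
  rw [e1, e2]
  congr 1
  rw [Nat.mod_add_mod]
  have : (j + (t + s) % m) % m = (j + (t + s)) % m := by
    conv_rhs => rw [Nat.add_mod]
    conv_lhs => rw [Nat.add_mod]
    rw [Nat.mod_mod_of_dvd _ dvd_rfl]
  rw [this, ← Nat.add_assoc]

lemma shiftRelAt_to_Rel {π σ : Equiv.Perm (Fin n)} {k ℓ : ℕ}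
    (h : shiftRelAt π σ k ℓ) : Rel n k π σ := by
  obtain ⟨hk, hkl, hln, hgen, hck, hcl, hcn⟩ := h
  set m := n - k with hm
  have hmpos : 0 < m := by omega
  have hgen' : ∀ a, a + 1 < n → a + 1 ≠ k → a + 1 ≠ ℓ → σ (w π a) = w π (a + 1) := by
    intro a h1 h2 h3
    have := hgen (a + 1) (by omega) h1 h2 h3
    simpa [w] using this
  have hck' : σ (w π (k - 1)) = w π ℓ := hck
  have hcn' : σ (w π (n - 1)) = w π k := hcn
  have main : ∀ i, i < n → w σ i = w π (if i < k then i else k + (i - k + (ℓ - k)) % m) := by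
    intro i
    induction i with
    | zero => intro _; rw [if_pos (by omega), w_zero, w_zero]
    | succ i ih =>
      intro hi1
      have hin : i < n := by omega
      rw [w_succ, ih hin]
      by_cases hc1 : i + 1 < k
      · rw [if_pos (by omega : i < k), if_pos hc1]
        exact hgen' i (by omega) (by omega) (by omega)
      · by_cases hc2 : i + 1 = k
        · rw [if_pos (by omega : i < k), if_neg (by omega : ¬ i + 1 < k)]
          rw [show i + 1 - k + (ℓ - k) = ℓ - k from by omega, Nat.mod_eq_of_lt (by omega),
            show k + (ℓ - k) = ℓ from by omega, show i = k - 1 from by omega]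
          exact hck'
        · have hik : k ≤ i := by omega
          rw [if_neg (by omega : ¬ i < k), if_neg (by omega : ¬ i + 1 < k)]
          rw [show i + 1 - k + (ℓ - k) = (i - k + (ℓ - k)) + 1 from by omega]
          set r := (i - k + (ℓ - k)) % m with hr
          have hrm : r < m := Nat.mod_lt _ hmpos
          have hsucc : ((i - k + (ℓ - k)) + 1) % m = if r + 1 < m then r + 1 else 0 := by
            rw [← Nat.mod_add_mod, ← hr, mod_helper hrm (by omega : 1 < m)]
            split_ifs <;> omega
          rw [hsucc]
          by_cases hcase : r + 1 < m
          · rw [if_pos hcase]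
            have hrℓ : r ≠ ℓ - k - 1 := by
              rw [hr, mod_helper (show i - k < m by omega) (show ℓ - k < m by omega)]
              split_ifs <;> omega
            rw [show k + (r + 1) = (k + r) + 1 from by omega]
            exact hgen' (k + r) (by omega) (by omega) (by omega)
          · rw [if_neg hcase, Nat.add_zero, show k + r = n - 1 from by omega]
            exact hcn'
  refine ⟨fun i hi => ?_, ℓ - k, by omega, fun j hj => ?_⟩
  · have := main i (by omega)
    rwa [if_pos hi] at this
  · have := main (k + j) (by omega)
    rwa [if_neg (by omega), Nat.add_sub_cancel_left k j] at this

lemma not_shiftRel_self {π : Equiv.Perm (Fin n)} (hπ : IsNCycle π) : ¬ shiftRel π π := by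
  rintro ⟨k, ℓ, hk, hkl, hln, -, -, hcl, -⟩
  have h0 : w π ℓ = 0 := by
    rw [show ℓ = ℓ - 1 + 1 from by omega, w_succ]
    exact hcl
  have : w π ℓ = w π 0 := by rw [h0, w_zero]
  have := w_inj hπ hln (by omega) this
  omega

lemma Rel_to_shiftRel {π σ : Equiv.Perm (Fin n)} {k : ℕ}
    (hπ : IsNCycle π) (hσ : IsNCycle σ) (hne : σ ≠ π)
    (hk1 : 1 ≤ k) (hk2 : k + 2 ≤ n) (h : Rel n k π σ) : shiftRel π σ := by
  obtain ⟨h1, s, hs, h2⟩ := h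
  set m := n - k with hm
  have hm2 : 2 ≤ m := by omega
  rcases Nat.eq_zero_or_pos s with rfl | hspos
  · exfalso
    apply hne
    apply eq_of_word_eq hπ hσ
    intro i hi
    by_cases hik : i < k
    · exact h1 i hik
    · have := h2 (i - k) (by omega)
      rwa [Nat.add_sub_cancel' (by omega : k ≤ i), Nat.add_zero,
        Nat.mod_eq_of_lt (by omega), Nat.add_sub_cancel' (by omega : k ≤ i)] at this
  · set ℓ := k + s with hℓ
    have word : ∀ i, i < n → w σ i = w π (if i < k then i else k + (i - k + s) % m) := by
      intro i hi
      split_ifs with hik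
      · exact h1 i hik
      · have := h2 (i - k) (by omega)
        rwa [Nat.add_sub_cancel' (by omega : k ≤ i)] at this
    have laststep : σ (w σ (n - 1)) = 0 := by
      have h0 := w_succ σ (n - 1)
      rw [show n - 1 + 1 = n from by omega, w_n hσ] at h0
      exact h0.symm
    refine ⟨k, ℓ, hk1, by omega, by omega, ?_, ?_, ?_, ?_⟩
    · -- generic clause
      intro i hi1 hi2 hik hiℓ
      show σ (w π (i - 1)) = w π i
      by_cases hc : i - 1 < k
      · have hik' : i < k := by omega
        have e1 : w π (i - 1) = w σ (i - 1) := by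
          have := word (i - 1) (by omega)
          rw [if_pos hc] at this
          exact this.symm
        rw [e1, show σ (w σ (i - 1)) = w σ (i - 1 + 1) from (w_succ σ (i - 1)).symm,
          show i - 1 + 1 = i from by omega]
        have := word i (by omega)
        rwa [if_pos hik'] at this
      · have hik2 : k + 1 ≤ i := by omega
        set r := i - 1 - k with hrdef
        have hrm : r + 1 < m := by omega
        rcases Nat.lt_or_ge r s with hrs | hrs
        · set a := k + (r + m - s) with hadef
          have ha1 : a < n := by omega
          have ha0 : w π (i - 1) = w σ a := by
            have := word a ha1
            rw [if_neg (by omega), show a - k + s = r + m from by omega,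
              Nat.add_mod_right, Nat.mod_eq_of_lt (by omega),
              show k + r = i - 1 from by omega] at this
            exact this.symm
          have ha2 : a + 1 < n := by omega
          rw [ha0, show σ (w σ a) = w σ (a + 1) from (w_succ σ a).symm]
          have := word (a + 1) ha2
          rwa [if_neg (by omega), show a + 1 - k + s = r + 1 + m from by omega,
            Nat.add_mod_right, Nat.mod_eq_of_lt hrm,
            show k + (r + 1) = i from by omega] at this
        · set a := k + (r - s) with hadef
          have ha1 : a < n := by omega
          have ha0 : w π (i - 1) = w σ a := by
            have := word a ha1
            rw [if_neg (by omega), show a - k + s = r from by omega,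
              Nat.mod_eq_of_lt (by omega : r < m),
              show k + r = i - 1 from by omega] at this
            exact this.symm
          have ha2 : a + 1 < n := by omega
          rw [ha0, show σ (w σ a) = w σ (a + 1) from (w_succ σ a).symm]
          have := word (a + 1) ha2
          rwa [if_neg (by omega), show a + 1 - k + s = r + 1 from by omega,
            Nat.mod_eq_of_lt hrm, show k + (r + 1) = i from by omega] at this
    · -- k clause
      show σ (w π (k - 1)) = w π ℓ
      have e1 : w π (k - 1) = w σ (k - 1) := by
        have := word (k - 1) (by omega)
        rw [if_pos (by omega)] at this
        exact this.symm
      rw [e1, show σ (w σ (k - 1)) = w σ (k - 1 + 1) from (w_succ σ (k - 1)).symm,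
        show k - 1 + 1 = k from by omega]
      have := word k (by omega)
      rwa [if_neg (by omega), show k - k + s = s from by omega,
        Nat.mod_eq_of_lt (by omega), ← hℓ] at this
    · -- ℓ clause
      show σ (w π (ℓ - 1)) = 0
      have e1 : w π (ℓ - 1) = w σ (n - 1) := by
        have := word (n - 1) (by omega)
        rw [if_neg (by omega), show n - 1 - k + s = (s - 1) + m from by omega,
          Nat.add_mod_right, Nat.mod_eq_of_lt (by omega : s - 1 < m),
          show k + (s - 1) = ℓ - 1 from by omega] at this
        exact this.symm
      rw [e1]
      exact laststep
    · -- n clause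
      show σ (w π (n - 1)) = w π k
      set a := k + (m - 1 - s) with hadef
      have ha1 : a < n := by omega
      have e1 : w π (n - 1) = w σ a := by
        have := word a ha1
        rw [if_neg (by omega), show a - k + s = m - 1 from by omega,
          Nat.mod_eq_of_lt (by omega), show k + (m - 1) = n - 1 from by omega] at this
        exact this.symm
      have ha2 : a + 1 < n := by omega
      rw [e1, show σ (w σ a) = w σ (a + 1) from (w_succ σ a).symm]
      have := word (a + 1) ha2
      rwa [if_neg (by omega), show a + 1 - k + s = m from by omega,
        Nat.mod_self, Nat.add_zero] at this

lemma Rel_unique {π σ : Equiv.Perm (Fin n)} (hπ : IsNCycle π) (hσ : IsNCycle σ)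
    (hne : σ ≠ π) {k k' : ℕ} (hk : k < n) (hk' : k' < n)
    (h : Rel n k π σ) (h' : Rel n k' π σ) : k = k' := by
  have key : ∀ j, j < n → Rel n j π σ → w σ j ≠ w π j := by
    intro j hj hrel
    obtain ⟨h1, s, hs, h2⟩ := hrel
    rcases Nat.eq_zero_or_pos s with rfl | hspos
    · exfalso
      apply hne
      apply eq_of_word_eq hπ hσ
      intro i hi
      by_cases hik : i < j
      · exact h1 i hik
      · have := h2 (i - j) (by omega)
        rwa [Nat.add_sub_cancel' (by omega : j ≤ i), Nat.add_zero,
          Nat.mod_eq_of_lt (by omega), Nat.add_sub_cancel' (by omega : j ≤ i)] at this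
    · have e := h2 0 (by omega)
      rw [Nat.add_zero, Nat.zero_add, Nat.mod_eq_of_lt hs] at e
      rw [e]
      intro hcontra
      have := w_inj hπ (by omega : j + s < n) hj hcontra
      omega
  rcases Nat.lt_trichotomy k k' with hlt | heq | hgt
  · exact absurd (h'.1 k hlt) (key k hk h)
  · exact heq
  · exact absurd (h.1 k' hgt) (key k' hk' h')

end ShiftAux


/-- The 0/1 matrix of an equivalence relation is positive semidefinite. -/
lemma psd_of_equivalence {I : Type*} [Fintype I] (r : I → I → Prop) (h : Equivalence r) :
    Matrix.PosSemidef (Matrix.of fun i j => if r i j then (1 : ℝ) else 0) := by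
  classical
  let st : Setoid I := ⟨r, h⟩
  let A : Matrix (Quotient st) I ℝ := Matrix.of fun c i => if Quotient.mk st i = c then 1 else 0
  have key : (Matrix.of fun i j => if r i j then (1 : ℝ) else 0) = Aᴴ * A := by
    ext i j
    simp only [Matrix.mul_apply, Matrix.conjTranspose_apply, Matrix.of_apply, A]
    have hterm : ∀ c, star (if Quotient.mk st i = c then (1 : ℝ) else 0) *
        (if Quotient.mk st j = c then (1 : ℝ) else 0) =
        if Quotient.mk st i = c ∧ Quotient.mk st j = c then 1 else 0 := by
      intro c
      by_cases h1 : Quotient.mk st i = c <;> by_cases h2 : Quotient.mk st j = c <;>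
        simp [h1, h2]
    rw [Finset.sum_congr rfl fun c _ => hterm c]
    by_cases hij : r i j
    · have hq : Quotient.mk st i = Quotient.mk st j := Quotient.sound hij
      rw [if_pos hij]
      have : ∀ c, (Quotient.mk st i = c ∧ Quotient.mk st j = c) ↔ Quotient.mk st i = c := by
        intro c
        constructor
        · exact fun hc => hc.1
        · exact fun hc => ⟨hc, hq ▸ hc⟩
      rw [Finset.sum_congr rfl fun c _ => by rw [if_congr (this c) rfl rfl]]
      simp [Finset.sum_ite_eq]
    · rw [if_neg hij]
      symm
      apply Finset.sum_eq_zero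
      intro c _
      rw [if_neg]
      rintro ⟨hc1, hc2⟩
      exact hij (Quotient.exact (hc1.trans hc2.symm))
  rw [key]
  exact Matrix.posSemidef_conjTranspose_mul_self A

lemma psd_sum {I : Type*} [Fintype I] (s : Finset ℕ) (f : ℕ → Matrix I I ℝ)
    (h : ∀ k ∈ s, (f k).PosSemidef) : (∑ k ∈ s, f k).PosSemidef := by
  classical
  induction s using Finset.induction_on with
  | empty => simpa using Matrix.PosSemidef.zero
  | insert _ _ hnot ih =>
    rw [Finset.sum_insert hnot]
    exact (h _ (Finset.mem_insert_self _ _)).add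
      (ih fun k hk => h k (Finset.mem_insert_of_mem hk))

set_option maxHeartbeats 1000000 in
open ShiftAux in
/-- `(n-2)·I + Γ` is positive semidefinite, i.e. `λ_min(Γ) ≥ -(n-2)`. -/
theorem gammaMat_posSemidef (n : ℕ) [NeZero n] :
    (((n : ℝ) - 2) • (1 : Matrix {π : Equiv.Perm (Fin n) // IsNCycle π}
        {π : Equiv.Perm (Fin n) // IsNCycle π} ℝ) + gammaMat n).PosSemidef := by
  classical
  by_cases hn : 2 ≤ n
  · have key : (((n : ℝ) - 2) • (1 : Matrix {π : Equiv.Perm (Fin n) // IsNCycle π}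
        {π : Equiv.Perm (Fin n) // IsNCycle π} ℝ) + gammaMat n) =
        ∑ k ∈ Finset.Icc 1 (n - 2),
          (Matrix.of fun π σ : {π : Equiv.Perm (Fin n) // IsNCycle π} =>
            if ShiftAux.Rel n k π.1 σ.1 then (1 : ℝ) else 0) := by
      ext π σ
      rw [Matrix.sum_apply]
      simp only [Matrix.add_apply, Matrix.smul_apply, Matrix.one_apply, Matrix.of_apply,
        smul_eq_mul, gammaMat]
      by_cases hps : π = σ
      · subst hps
        rw [if_pos rfl, if_neg (ShiftAux.not_shiftRel_self π.2), mul_one, add_zero]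
        have hval : ∀ k ∈ Finset.Icc 1 (n - 2),
            (if ShiftAux.Rel n k π.1 π.1 then (1 : ℝ) else 0) = 1 := by
          intro k hk
          rw [Finset.mem_Icc] at hk
          exact if_pos (ShiftAux.Rel.refl k (by omega) π.1)
        rw [Finset.sum_congr rfl hval, Finset.sum_const, Nat.card_Icc,
          show n - 2 + 1 - 1 = n - 2 from by omega, nsmul_eq_mul, mul_one,
          Nat.cast_sub hn]
        norm_num
      · have hne1 : σ.1 ≠ π.1 := fun h => hps (Subtype.ext h.symm)
        rw [if_neg hps, mul_zero, zero_add]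
        by_cases hsr : shiftRel π.1 σ.1
        · rw [if_pos hsr]
          obtain ⟨k, ℓ, hat⟩ := hsr
          have hrel := ShiftAux.shiftRelAt_to_Rel hat
          obtain ⟨hk1, hkl, hln, -, -, -, -⟩ := hat
          symm
          rw [Finset.sum_eq_single_of_mem k (Finset.mem_Icc.mpr ⟨hk1, by omega⟩)]
          · exact if_pos hrel
          · intro b hb hbk
            rw [Finset.mem_Icc] at hb
            rw [if_neg]
            intro hrelb
            exact hbk (ShiftAux.Rel_unique π.2 σ.2 hne1 (by omega) (by omega) hrelb hrel)
        · rw [if_neg hsr]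
          symm
          apply Finset.sum_eq_zero
          intro k hk
          rw [Finset.mem_Icc] at hk
          rw [if_neg]
          intro hrel
          exact hsr (ShiftAux.Rel_to_shiftRel π.2 σ.2 hne1 hk.1 (by omega) hrel)
    rw [key]
    apply psd_sum
    intro k hk
    rw [Finset.mem_Icc] at hk
    exact psd_of_equivalence _
      ⟨fun π => ShiftAux.Rel.refl k (by omega) π.1, fun h => h.symm, fun h1 h2 => h1.trans h2⟩
  · have h1 : n = 1 := by have := NeZero.pos n; omega
    have hempty : IsEmpty {π : Equiv.Perm (Fin n) // IsNCycle π} := by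
      subst h1
      refine ⟨fun π => ?_⟩
      obtain ⟨x, hx, -⟩ := π.2.1
      exact hx (Subsingleton.elim _ _)
    constructor
    · ext i j
      exact (hempty.false i).elim
    · intro x
      have : ∀ i, x i = 0 := fun i => (hempty.false i).elim
      simp [show x = 0 from Finsupp.ext fun i => by simp [this i]]
end

section
/- Let $\pi, \sigma \in \mathfrak{C}_n$ with $\pi \leftrightsquigarrow \sigma$ via cut points $k < \ell$ and cycle notation $1\mapsto p_2 \mapsto \cdots \mapsto p_n \mapsto 1$ for $\pi$. Then $\pi^{-1}\sigma$ is the 3-cycle $(p_k\, p_\ell\, p_n)$ (mapping $p_k \mapsto p_\ell \mapsto p_n \mapsto p_k$), fixing all other points. -/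
open Matrix

attribute [local instance] Classical.propDecidable

/-!
Write `p j = π^j 0`. Since `π` is an `n`-cycle, `p 0, …, p (n-1)` lists `Fin n` without
repetition, `π⁻¹ (p (j+1)) = p j` and `π⁻¹ (p 0) = p (n-1)`. Hence `π⁻¹ σ` fixes every `p j`
at which `σ` agrees with `π`, and at the three cut points `σ` differs from `π` exactly so
that `π⁻¹ σ` cycles `p (k-1) ↦ p (ℓ-1) ↦ p (n-1) ↦ p (k-1)`.
-/

theorem Equiv.Perm.eq_swap_mul_swap_of_apply {α : Type*} [DecidableEq α] {f : Equiv.Perm α}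
    {a b c : α} (hab : a ≠ b) (hac : a ≠ c) (hbc : b ≠ c)
    (ha : f a = b) (hb : f b = c) (hc : f c = a)
    (hfix : ∀ x, x ≠ a → x ≠ b → x ≠ c → f x = x) :
    f = Equiv.swap a c * Equiv.swap a b := by
  ext x
  rw [Equiv.Perm.mul_apply]
  by_cases hxa : x = a
  · rw [hxa, ha, Equiv.swap_apply_left, Equiv.swap_apply_of_ne_of_ne hab.symm hbc]
  by_cases hxb : x = b
  · rw [hxb, hb, Equiv.swap_apply_right, Equiv.swap_apply_left]
  by_cases hxc : x = c
  · rw [hxc, hc, Equiv.swap_apply_of_ne_of_ne hac.symm hbc.symm, Equiv.swap_apply_right]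
  rw [hfix x hxa hxb hxc, Equiv.swap_apply_of_ne_of_ne hxa hxb,
    Equiv.swap_apply_of_ne_of_ne hxa hxc]

theorem Equiv.Perm.inv_apply_pow_apply {α : Type*} (f : Equiv.Perm α) (x : α) {m : ℕ}
    (hm : 1 ≤ m) : f⁻¹ ((f ^ m) x) = (f ^ (m - 1)) x := by
  rw [Equiv.Perm.inv_eq_iff_eq, ← Equiv.Perm.mul_apply, ← pow_succ', Nat.sub_add_cancel hm]

namespace IsNCycle

variable {n : ℕ} {π : Equiv.Perm (Fin n)}

theorem isCycleOn (hπ : IsNCycle π) :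
    π.IsCycleOn ((Finset.univ : Finset (Fin n)) : Set (Fin n)) := by
  have := hπ.1.isCycleOn
  rwa [← Equiv.Perm.coe_support_eq_set_support, hπ.2] at this

theorem pow_apply_inj (hπ : IsNCycle π) (x : Fin n) {a b : ℕ} (ha : a < n) (hb : b < n) :
    (π ^ a) x = (π ^ b) x ↔ a = b := by
  rw [hπ.isCycleOn.pow_apply_eq_pow_apply (Finset.mem_coe.2 (Finset.mem_univ x)),
    Finset.card_univ, Fintype.card_fin, Nat.ModEq, Nat.mod_eq_of_lt ha, Nat.mod_eq_of_lt hb]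

theorem exists_pow_apply_eq (hπ : IsNCycle π) (x y : Fin n) : ∃ j < n, (π ^ j) x = y := by
  simpa using hπ.isCycleOn.exists_pow_eq (Finset.mem_coe.2 (Finset.mem_univ x))
    (Finset.mem_coe.2 (Finset.mem_univ y))

theorem inv_apply (hπ : IsNCycle π) (x : Fin n) : π⁻¹ x = (π ^ (n - 1)) x := by
  have hn : 1 ≤ n := Fin.pos x
  conv_lhs => rw [← hπ.isCycleOn.pow_card_apply (Finset.mem_coe.2 (Finset.mem_univ x))]
  rw [Finset.card_univ, Fintype.card_fin, π.inv_apply_pow_apply x hn]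

end IsNCycle

theorem shiftRelAt_inv_mul_general (n : ℕ) [NeZero n] (π σ : Equiv.Perm (Fin n))
    (hπ : IsNCycle π) (k ℓ : ℕ) (h : shiftRelAt π σ k ℓ) :
    π⁻¹ * σ =
      Equiv.swap ((π ^ (k - 1)) (0 : Fin n)) ((π ^ (n - 1)) (0 : Fin n)) *
        Equiv.swap ((π ^ (k - 1)) (0 : Fin n)) ((π ^ (ℓ - 1)) (0 : Fin n)) := by
  obtain ⟨hk, hkℓ, hℓn, hσ, hσk, hσℓ, hσn⟩ := h
  have hp_ne : ∀ {i j}, i < n → j < n → i ≠ j → (π ^ i) (0 : Fin n) ≠ (π ^ j) 0 :=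
    fun hi hj hij => mt (hπ.pow_apply_inj 0 hi hj).1 hij
  refine Equiv.Perm.eq_swap_mul_swap_of_apply (hp_ne (by omega) (by omega) (by omega))
    (hp_ne (by omega) (by omega) (by omega)) (hp_ne (by omega) (by omega) (by omega)) ?_ ?_ ?_ ?_
  · rw [Equiv.Perm.mul_apply, hσk, π.inv_apply_pow_apply 0 (by omega)]
  · rw [Equiv.Perm.mul_apply, hσℓ, hπ.inv_apply]
  · rw [Equiv.Perm.mul_apply, hσn, π.inv_apply_pow_apply 0 hk]
  · intro x hxk hxℓ hxn
    obtain ⟨j, hj, rfl⟩ := hπ.exists_pow_apply_eq 0 x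
    have hjk : j ≠ k - 1 := by rintro rfl; exact hxk rfl
    have hjℓ : j ≠ ℓ - 1 := by rintro rfl; exact hxℓ rfl
    have hjn : j ≠ n - 1 := by rintro rfl; exact hxn rfl
    have hσj := hσ (j + 1) (by omega) (by omega) (by omega) (by omega)
    rw [Nat.add_sub_cancel] at hσj
    rw [Equiv.Perm.mul_apply, hσj, π.inv_apply_pow_apply 0 (by omega), Nat.add_sub_cancel]

/-- If `π ⟷ σ` via cut points `k < ℓ`, then `π⁻¹ * σ` is the 3-cycle
`(p k, p ℓ, p n)` mapping `p k ↦ p ℓ ↦ p n ↦ p k` and fixing all other points,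
where `p i = π^(i-1) 0`. -/
theorem shiftRelAt_inv_mul (n : ℕ) [NeZero n] (π σ : Equiv.Perm (Fin n))
    (hπ : IsNCycle π) (hσ : IsNCycle σ) (k ℓ : ℕ) (h : shiftRelAt π σ k ℓ) :
    π⁻¹ * σ =
      Equiv.swap ((π ^ (k - 1)) (0 : Fin n)) ((π ^ (n - 1)) (0 : Fin n)) *
        Equiv.swap ((π ^ (k - 1)) (0 : Fin n)) ((π ^ (ℓ - 1)) (0 : Fin n)) :=
  shiftRelAt_inv_mul_general n π σ hπ k ℓ h
end

section
/- Let $O_0 \ne O_1$ be unitaries on $\mathcal{M}$ and $a,b \in \mathbb{C}$, and let $w_0, w_1 \ge 0$ satisfy $\sqrt{w_0 w_1} \ge |a-b| / \|O_0 - O_1\|$. Then there exist a finite-dimensional space $\mathcal{W}$ and vectors $v_0, v_1 \in \mathcal{M} \otimes \mathcal{W}$ with $\|v_0\|^2 = w_0$, $\|v_1\|^2 = w_1$, $\langle v_0, ((I-O_0^*O_1) \otimes I_{\mathcal{W}}) v_1 \rangle = a - b$, and $\langle v_x, ((I-O_x^*O_x) \otimes I_{\mathcal{W}}) v_x \rangle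 = 0$ for $x \in \{0,1\}$. -/
open Matrix
open scoped Kronecker

private lemma star_dot_self' {n : ℕ} (x : Fin n → ℂ) :
    star x ⬝ᵥ x = ((∑ i, ‖x i‖ ^ 2 : ℝ) : ℂ) := by
  push_cast
  simp only [dotProduct, Pi.star_apply]
  refine Finset.sum_congr rfl fun i _ => ?_
  rw [mul_comm, Complex.star_def, Complex.mul_conj, Complex.normSq_eq_norm_sq]
  push_cast
  ring

private lemma unitary_mulVec_dot' {n : ℕ} (U : Matrix (Fin n) (Fin n) ℂ)
    (hU : Uᴴ * U = 1) (v : Fin n → ℂ) :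
    star (U.mulVec v) ⬝ᵥ (U.mulVec v) = star v ⬝ᵥ v := by
  rw [star_mulVec, dotProduct_mulVec, vecMul_vecMul, hU, vecMul_one]

private lemma opNormSq_attained' {m : ℕ} (hm : 0 < m) (B : Matrix (Fin m) (Fin m) ℂ) :
    ∃ w : Fin m → ℂ, (∑ j, ‖w j‖ ^ 2 = 1) ∧
      (∑ i, ‖B.mulVec w i‖ ^ 2 = opNormSq B) ∧
      (∀ v : Fin m → ℂ, (∑ j, ‖v j‖ ^ 2 = 1) →
        ∑ i, ‖B.mulVec v i‖ ^ 2 ≤ ∑ i, ‖B.mulVec w i‖ ^ 2) := by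
  set g : (Fin m → ℂ) → ℝ := fun v => ∑ i, ‖B.mulVec v i‖ ^ 2 with hg
  have hgcont : Continuous g := by
    have h1 : Continuous fun v : Fin m → ℂ => B.mulVecLin v :=
      B.mulVecLin.continuous_of_finiteDimensional
    have : g = fun v => ∑ i, ‖B.mulVecLin v i‖ ^ 2 := rfl
    rw [this]
    continuity
  set S : Set (Fin m → ℂ) := {v | ∑ j, ‖v j‖ ^ 2 = 1} with hS
  have hScl : IsClosed S := by
    have : Continuous fun v : Fin m → ℂ => ∑ j, ‖v j‖ ^ 2 := by continuity
    exact isClosed_eq this continuous_const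
  have hSsub : S ⊆ Metric.closedBall 0 1 := by
    intro v hv
    simp only [Metric.mem_closedBall, dist_zero_right]
    rw [pi_norm_le_iff_of_nonneg (by norm_num)]
    intro i
    have h1 : ‖v i‖ ^ 2 ≤ 1 := by
      rw [← hv]
      exact Finset.single_le_sum (fun j _ => sq_nonneg ‖v j‖) (Finset.mem_univ i)
    nlinarith [norm_nonneg (v i)]
  have hScomp : IsCompact S :=
    (isCompact_closedBall (0 : Fin m → ℂ) 1).of_isClosed_subset hScl hSsub
  have hSne : S.Nonempty := by
    refine ⟨Pi.single (⟨0, hm⟩ : Fin m) (1 : ℂ), ?_⟩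
    simp [hS, Pi.single_apply, apply_ite]
  obtain ⟨w, hwS, hwmax⟩ := hScomp.exists_isMaxOn hSne hgcont.continuousOn
  refine ⟨w, hwS, ?_, fun v hv => hwmax hv⟩
  haveI : Nonempty {v : Fin m → ℂ // ∑ j, ‖v j‖ ^ 2 = 1} := ⟨⟨w, hwS⟩⟩
  have hbdd : BddAbove (Set.range fun v : {v : Fin m → ℂ // ∑ j, ‖v j‖ ^ 2 = 1} => g v.1) := by
    refine ⟨g w, ?_⟩
    rintro x ⟨v, rfl⟩
    exact hwmax v.2
  refine le_antisymm (le_ciSup hbdd (⟨w, hwS⟩ : {v : Fin m → ℂ // ∑ j, ‖v j‖ ^ 2 = 1})) ?_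
  exact ciSup_le fun v => hwmax v.2

private lemma kron_one_mulVec' {m n : ℕ} (A : Matrix (Fin m) (Fin m) ℂ)
    (x : Fin m → ℂ) (j₀ : Fin n) :
    (A ⊗ₖ (1 : Matrix (Fin n) (Fin n) ℂ)).mulVec
      (fun p : Fin m × Fin n => if p.2 = j₀ then x p.1 else 0) =
    fun p : Fin m × Fin n => if p.2 = j₀ then A.mulVec x p.1 else 0 := by
  funext p
  simp only [mulVec, dotProduct, Fintype.sum_prod_type, kroneckerMap_apply, one_apply,
    mul_ite, ite_mul, mul_zero, zero_mul, mul_one, one_mul, Finset.sum_ite_eq',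
    Finset.mem_univ, if_true]
  by_cases h : p.2 = j₀ <;> simp [h]

/-- Achievability in the two-label adversary problem: given unitaries `O₀ ≠ O₁` and
`w₀, w₁ ≥ 0` with `√(w₀ w₁) ≥ |a - b| / ‖O₀ - O₁‖`, there exist a space `W` and vectors
`v₀, v₁ ∈ M ⊗ W` with `‖v₀‖² = w₀`, `‖v₁‖² = w₁`,
`⟨v₀, ((I - O₀*O₁) ⊗ I) v₁⟩ = a - b`, and `⟨vₓ, ((I - Oₓ*Oₓ) ⊗ I) vₓ⟩ = 0`. -/
theorem two_label_upper_bound (m : ℕ)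
    (O₀ O₁ : Matrix (Fin m) (Fin m) ℂ)
    (h₀ : O₀ ∈ Matrix.unitaryGroup (Fin m) ℂ) (h₁ : O₁ ∈ Matrix.unitaryGroup (Fin m) ℂ)
    (hne : O₀ ≠ O₁) (a b : ℂ) (w₀ w₁ : ℝ) (hw₀ : 0 ≤ w₀) (hw₁ : 0 ≤ w₁)
    (hge : ‖a - b‖ / Real.sqrt (opNormSq (O₀ - O₁)) ≤ Real.sqrt (w₀ * w₁)) :
    ∃ (wdim : ℕ) (v₀ v₁ : Fin m × Fin wdim → ℂ),
      (∑ i, ‖v₀ i‖ ^ 2 = w₀) ∧ (∑ i, ‖v₁ i‖ ^ 2 = w₁) ∧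
      star v₀ ⬝ᵥ ((((1 : Matrix (Fin m) (Fin m) ℂ) - O₀ᴴ * O₁) ⊗ₖ
        (1 : Matrix (Fin wdim) (Fin wdim) ℂ)).mulVec v₁) = a - b ∧
      star v₀ ⬝ᵥ ((((1 : Matrix (Fin m) (Fin m) ℂ) - O₀ᴴ * O₀) ⊗ₖ
        (1 : Matrix (Fin wdim) (Fin wdim) ℂ)).mulVec v₀) = 0 ∧
      star v₁ ⬝ᵥ ((((1 : Matrix (Fin m) (Fin m) ℂ) - O₁ᴴ * O₁) ⊗ₖ
        (1 : Matrix (Fin wdim) (Fin wdim) ℂ)).mulVec v₁) = 0 := by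
  -- unitarity facts
  have h₀s : O₀ᴴ * O₀ = 1 := by
    have := h₀.1; rwa [Matrix.star_eq_conjTranspose] at this
  have h₀s' : O₀ * O₀ᴴ = 1 := by
    have := h₀.2; rwa [Matrix.star_eq_conjTranspose] at this
  have h₁s : O₁ᴴ * O₁ = 1 := by
    have := h₁.1; rwa [Matrix.star_eq_conjTranspose] at this
  -- zero conditions hold for any vectors
  have hz₀ : (1 : Matrix (Fin m) (Fin m) ℂ) - O₀ᴴ * O₀ = 0 := by rw [h₀s, sub_self]
  have hz₁ : (1 : Matrix (Fin m) (Fin m) ℂ) - O₁ᴴ * O₁ = 0 := by rw [h₁s, sub_self]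
  -- m positive
  have hm : 0 < m := by
    rcases Nat.eq_zero_or_pos m with h | h
    · subst h
      exact absurd (Subsingleton.elim O₀ O₁) hne
    · exact h
  set B : Matrix (Fin m) (Fin m) ℂ := O₀ - O₁ with hB
  obtain ⟨w, hwnorm, hwval, hwmax⟩ := opNormSq_attained' hm B
  -- positivity of opNormSq B
  have hBne : B ≠ 0 := sub_ne_zero_of_ne hne
  have hpos : 0 < ∑ i, ‖B.mulVec w i‖ ^ 2 := by
    obtain ⟨i₀, k₀, hik⟩ : ∃ i k, B i k ≠ 0 := by
      by_contra h
      push_neg at h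
      exact hBne (Matrix.ext fun i k => h i k)
    have hvS : ∑ j, ‖((Pi.single k₀ (1 : ℂ) : Fin m → ℂ)) j‖ ^ 2 = 1 := by
      have hterm : ∀ j, ‖((Pi.single k₀ (1 : ℂ) : Fin m → ℂ)) j‖ ^ 2 = if j = k₀ then 1 else 0 := by
        intro j
        by_cases hj : j = k₀ <;> simp [Pi.single_apply, hj]
      rw [Finset.sum_congr rfl fun j _ => hterm j,
        Finset.sum_ite_eq' Finset.univ k₀ (fun _ => (1 : ℝ))]
      simp
    have h1 : 0 < ∑ i, ‖B.mulVec (Pi.single k₀ (1 : ℂ)) i‖ ^ 2 := by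
      have hmv : B.mulVec (Pi.single k₀ (1 : ℂ)) = fun i => B i k₀ := by
        funext i
        simp [mulVec, dotProduct, Pi.single_apply, mul_ite]
      rw [hmv]
      have : 0 < ‖B i₀ k₀‖ ^ 2 := by
        have := norm_pos_iff.mpr hik
        positivity
      refine lt_of_lt_of_le this ?_
      exact Finset.single_le_sum (fun j _ => sq_nonneg ‖B j k₀‖) (Finset.mem_univ i₀)
    exact lt_of_lt_of_le h1 (hwmax _ hvS)
  have hposo : 0 < opNormSq B := hwval ▸ hpos
  set c : ℝ := Real.sqrt (opNormSq B) with hcdef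
  have hc : 0 < c := Real.sqrt_pos.mpr hposo
  have hc2 : c ^ 2 = opNormSq B := Real.sq_sqrt hposo.le
  set z : ℂ := a - b with hzdef
  have hzb : ‖z‖ ≤ Real.sqrt (w₀ * w₁) * c := by
    have := hge
    rw [div_le_iff₀ hc] at this
    exact this
  set s₁ : ℝ := Real.sqrt w₁ with hs₁def
  have hs₁sq : s₁ ^ 2 = w₁ := Real.sq_sqrt hw₁
  -- the coefficient λ
  set lam : ℂ := if w₁ = 0 then 0 else (starRingEnd ℂ) z / ((s₁ : ℂ) * (c : ℂ)) with hlam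
  have hlamz : (starRingEnd ℂ) lam * ((s₁ : ℂ) * (c : ℂ)) = z := by
    by_cases h : w₁ = 0
    · have hz0 : z = 0 := by
        have : Real.sqrt (w₀ * w₁) = 0 := by rw [h, mul_zero, Real.sqrt_zero]
        rw [this, zero_mul] at hzb
        exact norm_eq_zero.mp (le_antisymm hzb (norm_nonneg z))
      simp [hlam, h, hz0]
    · have hs₁pos : 0 < s₁ := Real.sqrt_pos.mpr (lt_of_le_of_ne hw₁ (Ne.symm h))
      have hsc : ((s₁ : ℂ) * (c : ℂ)) ≠ 0 := by
        simp only [ne_eq, mul_eq_zero, Complex.ofReal_eq_zero]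
        push_neg
        exact ⟨hs₁pos.ne', hc.ne'⟩
      rw [hlam, if_neg h, map_div₀, Complex.conj_conj, _root_.map_mul]
      simp only [Complex.conj_ofReal]
      field_simp
      rw [mul_assoc, mul_div_cancel_right₀ _ hsc]
  have hlamsq : Complex.normSq lam ≤ w₀ := by
    by_cases h : w₁ = 0
    · simp [hlam, h, hw₀]
    · have hw₁pos : 0 < w₁ := lt_of_le_of_ne hw₁ (Ne.symm h)
      have hs₁pos : 0 < s₁ := Real.sqrt_pos.mpr hw₁pos
      have h1 : Complex.normSq lam = ‖z‖ ^ 2 / (w₁ * c ^ 2) := by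
        rw [hlam, if_neg h, Complex.normSq_eq_norm_sq, norm_div, norm_mul]
        simp only [Complex.norm_conj, Complex.norm_real, Real.norm_eq_abs,
          abs_of_pos hs₁pos, abs_of_pos hc]
        rw [div_pow, mul_pow, hs₁sq]
      rw [h1]
      rw [div_le_iff₀ (by positivity)]
      have h2 : ‖z‖ ^ 2 ≤ w₀ * w₁ * c ^ 2 := by
        have h3 : Real.sqrt (w₀ * w₁) ^ 2 = w₀ * w₁ := Real.sq_sqrt (by positivity)
        nlinarith [norm_nonneg z, Real.sqrt_nonneg (w₀ * w₁), hc.le]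
      linarith
  set mu : ℝ := Real.sqrt (w₀ - Complex.normSq lam) with hmudef
  have hmusq : mu ^ 2 = w₀ - Complex.normSq lam := Real.sq_sqrt (by linarith)
  -- the vectors
  set Bw : Fin m → ℂ := B.mulVec w with hBw
  have hBwnorm : ∑ i, ‖Bw i‖ ^ 2 = c ^ 2 := by rw [hc2, hwval]
  set u : Fin m → ℂ := fun i => Bw i / (c : ℂ) with hu
  have hunorm : ∑ i, ‖u i‖ ^ 2 = 1 := by
    have : ∀ i, ‖u i‖ ^ 2 = ‖Bw i‖ ^ 2 / c ^ 2 := by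
      intro i
      rw [hu]
      simp only [norm_div, Complex.norm_real, Real.norm_eq_abs, abs_of_pos hc, div_pow]
    rw [Finset.sum_congr rfl fun i _ => this i, ← Finset.sum_div, hBwnorm,
      div_self (by positivity)]
  set u' : Fin m → ℂ := O₀ᴴ.mulVec u with hu'
  have hu'norm : ∑ i, ‖u' i‖ ^ 2 = 1 := by
    have h1 : star u' ⬝ᵥ u' = star u ⬝ᵥ u := by
      apply unitary_mulVec_dot'
      rw [conjTranspose_conjTranspose]
      exact h₀s'
    have h2 := star_dot_self' u'
    have h3 := star_dot_self' u
    rw [h2, h3] at h1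
    have := Complex.ofReal_injective h1
    rw [this, hunorm]
  -- define v₀ v₁
  refine ⟨2, fun p => (if p.2 = 0 then lam else (mu : ℂ)) * u' p.1,
    fun p => if p.2 = 0 then (s₁ : ℂ) * w p.1 else 0, ?_, ?_, ?_, ?_, ?_⟩
  · -- norm of v₀
    rw [Fintype.sum_prod_type]
    have : ∀ i : Fin m, ∑ j : Fin 2,
        ‖(if j = 0 then lam else (mu : ℂ)) * u' i‖ ^ 2
        = (Complex.normSq lam + mu ^ 2) * ‖u' i‖ ^ 2 := by
      intro i
      rw [Fin.sum_univ_two, if_pos rfl, if_neg (by decide : ¬((1 : Fin 2) = 0)),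
        norm_mul, norm_mul, mul_pow, mul_pow,
        ← Complex.normSq_eq_norm_sq lam, Complex.norm_real, Real.norm_eq_abs, sq_abs]
      ring
    rw [Finset.sum_congr rfl fun i _ => this i, ← Finset.mul_sum, hu'norm, mul_one, hmusq]
    ring
  · -- norm of v₁
    rw [Fintype.sum_prod_type]
    have : ∀ i : Fin m, ∑ j : Fin 2,
        ‖if j = 0 then (s₁ : ℂ) * w i else 0‖ ^ 2 = w₁ * ‖w i‖ ^ 2 := by
      intro i
      rw [Fin.sum_univ_two, if_pos rfl, if_neg (by decide : ¬((1 : Fin 2) = 0)),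
        norm_zero, norm_mul, mul_pow, Complex.norm_real, Real.norm_eq_abs, sq_abs, hs₁sq]
      ring
    rw [Finset.sum_congr rfl fun i _ => this i, ← Finset.mul_sum, hwnorm, mul_one]
  · -- inner product
    set A : Matrix (Fin m) (Fin m) ℂ := (1 : Matrix (Fin m) (Fin m) ℂ) - O₀ᴴ * O₁ with hAdef
    rw [kron_one_mulVec' A (fun i => (s₁ : ℂ) * w i) (0 : Fin 2)]
    have step1 : (star (fun p : Fin m × Fin 2 => (if p.2 = 0 then lam else (mu : ℂ)) * u' p.1)) ⬝ᵥ
        (fun p : Fin m × Fin 2 => if p.2 = 0 then A.mulVec (fun i => (s₁ : ℂ) * w i) p.1 else 0)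
        = (starRingEnd ℂ) lam * (star u' ⬝ᵥ A.mulVec (fun i => (s₁ : ℂ) * w i)) := by
      simp only [dotProduct, Pi.star_apply, Fintype.sum_prod_type, Fin.sum_univ_two,
        if_pos rfl, if_neg (by decide : ¬((1 : Fin 2) = 0)), mul_zero, add_zero,
        Finset.mul_sum]
      refine Finset.sum_congr rfl fun i _ => ?_
      simp only [star_mul', Complex.star_def, ite_true, if_true]
      ring
    rw [step1]
    have step2 : A.mulVec (fun i => (s₁ : ℂ) * w i) = fun i => (s₁ : ℂ) * A.mulVec w i := by
      funext i
      simp only [mulVec, dotProduct, Finset.mul_sum]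
      refine Finset.sum_congr rfl fun k _ => ?_
      ring
    rw [step2]
    have step3 : star u' ⬝ᵥ (fun i => (s₁ : ℂ) * A.mulVec w i)
        = (s₁ : ℂ) * (star u' ⬝ᵥ A.mulVec w) := by
      simp only [dotProduct, Finset.mul_sum]
      refine Finset.sum_congr rfl fun i _ => ?_
      ring
    rw [step3]
    have step4 : star u' ⬝ᵥ A.mulVec w = (c : ℂ) := by
      have e1 : star u' = star u ᵥ* O₀ := by
        rw [hu', star_mulVec, conjTranspose_conjTranspose]
      rw [e1, dotProduct_mulVec, vecMul_vecMul]
      have e2 : O₀ * A = B := by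
        rw [hAdef, hB, mul_sub, mul_one, ← mul_assoc, h₀s', one_mul]
      rw [e2, ← dotProduct_mulVec, ← hBw]
      have e3 : star u ⬝ᵥ Bw = (1 / (c : ℂ)) * (star Bw ⬝ᵥ Bw) := by
        simp only [dotProduct, hu, Pi.star_apply, Finset.mul_sum]
        refine Finset.sum_congr rfl fun i _ => ?_
        rw [star_div₀, Complex.star_def, Complex.conj_ofReal]
        field_simp
      rw [e3, star_dot_self' Bw, hBwnorm]
      have hcne : (c : ℂ) ≠ 0 := by exact_mod_cast hc.ne'
      push_cast
      field_simp
    rw [step4]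
    linear_combination hlamz
  · rw [hz₀, Matrix.zero_kronecker, Matrix.zero_mulVec, dotProduct_zero]
  · rw [hz₁, Matrix.zero_kronecker, Matrix.zero_mulVec, dotProduct_zero]
end

section
/- Let $O_x$ ($x \in D$, $D$ finite) be unitaries on $\mathcal{M}$, and suppose vectors $u_x, v_x \in \mathcal{M} \otimes \mathcal{W}$ and complex numbers $e_{xy}$ with $e_{yx} = \overline{e_{xy}}$ satisfy $e_{xy} = \langle u_x, ((I - O_x^* O_y) \otimes I_{\mathcal{W}}) v_y \rangle$ for all $x,y \in D$. Define $\tilde{v}_x = \frac{1}{2}\big((u_x + v_x) \oplus (\tilde{O}_x u_x - \tilde{O}_x v_x)\big) \in (\mathcal{M}\otimes\mathcal{W}) \oplus (\mathcal{M}\otimes\mathcal{W})$, where $\tilde{O}_x = O_x \otimes I_{\mathcal{W}}$. Then for all $x,y$: $e_{xy} = \langle \tilde{v}_x, ((I - (O_x^* O_y \oplus O_x O_y^*)) \otimes I) \tilde{v}_y \rangle$, and $\|\tilde{v}_x\|^2 = (\|u_x\|^2 + \|v_x\|^2)/2$. -/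
open Matrix
open scoped Kronecker


lemma kron_conjTranspose {m n p q : Type*} (A : Matrix m n ℂ) (B : Matrix p q ℂ) :
    (A ⊗ₖ B)ᴴ = Aᴴ ⊗ₖ Bᴴ := by
  ext i j
  simp [conjTranspose_apply, mul_comm]

lemma sub_kron {l m n p : Type*} (A B : Matrix l m ℂ) (C : Matrix n p ℂ) :
    (A - B) ⊗ₖ C = A ⊗ₖ C - B ⊗ₖ C := by
  ext i j
  simp [sub_mul]

lemma sum_norm_sq_eq_re {n : Type*} [Fintype n] (a : n → ℂ) :
    ∑ i, ‖a i‖ ^ 2 = (star a ⬝ᵥ a).re := by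
  simp [dotProduct, Complex.re_sum, Complex.sq_norm, mul_comm,
    Complex.mul_conj, Complex.normSq_apply]

lemma sandwich {n : Type*} [Fintype n] [DecidableEq n] (M N M' : Matrix n n ℂ) (s t : n → ℂ) :
    star (M *ᵥ s) ⬝ᵥ (N *ᵥ (M' *ᵥ t)) = star s ⬝ᵥ ((M ᴴ * (N * M')) *ᵥ t) := by
  rw [mulVec_mulVec, star_mulVec, ← dotProduct_mulVec, mulVec_mulVec]

lemma unitary_dot {n : Type*} [Fintype n] [DecidableEq n] (M : Matrix n n ℂ) (h : Mᴴ * M = 1) (s : n → ℂ) :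
    star (M *ᵥ s) ⬝ᵥ (M *ᵥ s) = star s ⬝ᵥ s := by
  rw [star_mulVec, ← dotProduct_mulVec, mulVec_mulVec, h, one_mulVec]


/-- Bidirectional-to-unidirectional conversion of feasible solutions: if
`e x y = ⟨u x, ((I - Oₓ* O_y) ⊗ I) (v y)⟩` with unitary `Oₓ`, then the vectors
`ṽ x = ½ ((u x + v x) ⊕ (Õₓ u x - Õₓ v x))` satisfy
`e x y = ⟨ṽ x, (I - (Oₓ* O_y ⊕ Oₓ O_y*)) ⊗ I (ṽ y)⟩` and
`‖ṽ x‖² = (‖u x‖² + ‖v x‖²)/2`. -/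
theorem bidirectional_to_unidirectional
    {D : Type*} [Fintype D] (m w : ℕ)
    (O : D → Matrix (Fin m) (Fin m) ℂ)
    (hO : ∀ x, O x ∈ Matrix.unitaryGroup (Fin m) ℂ)
    (u v : D → Fin m × Fin w → ℂ) (e : D → D → ℂ)
    (hsym : ∀ x y, e y x = starRingEnd ℂ (e x y))
    (he : ∀ x y, e x y = star (u x) ⬝ᵥ
      ((((1 : Matrix (Fin m) (Fin m) ℂ) - (O x)ᴴ * O y) ⊗ₖ
        (1 : Matrix (Fin w) (Fin w) ℂ)).mulVec (v y)))
    (tv : D → (Fin m × Fin w) ⊕ (Fin m × Fin w) → ℂ)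
    (htv : ∀ x, tv x = fun z => (1 / 2 : ℂ) *
      Sum.elim (u x + v x)
        (((O x ⊗ₖ (1 : Matrix (Fin w) (Fin w) ℂ)).mulVec (u x)) -
          ((O x ⊗ₖ (1 : Matrix (Fin w) (Fin w) ℂ)).mulVec (v x))) z) :
    ∀ x y,
      e x y = star (tv x) ⬝ᵥ
        ((Matrix.fromBlocks
          (((1 : Matrix (Fin m) (Fin m) ℂ) - (O x)ᴴ * O y) ⊗ₖ
            (1 : Matrix (Fin w) (Fin w) ℂ)) 0 0
          (((1 : Matrix (Fin m) (Fin m) ℂ) - O x * (O y)ᴴ) ⊗ₖ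
            (1 : Matrix (Fin w) (Fin w) ℂ))).mulVec (tv y)) ∧
      ∑ i, ‖tv x i‖ ^ 2 = (∑ i, ‖u x i‖ ^ 2 + ∑ i, ‖v x i‖ ^ 2) / 2 := by
  intro x y
  set Ox : Matrix (Fin m × Fin w) (Fin m × Fin w) ℂ := O x ⊗ₖ (1 : Matrix (Fin w) (Fin w) ℂ)
    with hOx
  set Oy : Matrix (Fin m × Fin w) (Fin m × Fin w) ℂ := O y ⊗ₖ (1 : Matrix (Fin w) (Fin w) ℂ)
    with hOy
  set P : Matrix (Fin m × Fin w) (Fin m × Fin w) ℂ :=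
    ((O x)ᴴ * O y) ⊗ₖ (1 : Matrix (Fin w) (Fin w) ℂ) with hP
  have hux : (O x)ᴴ * O x = 1 := (hO x).1
  have huy : (O y)ᴴ * O y = 1 := (hO y).1
  have hOxu : Oxᴴ * Ox = 1 := by
    rw [hOx, kron_conjTranspose, ← mul_kronecker_mul, hux, conjTranspose_one, Matrix.one_mul,
      one_kronecker_one]
  have hA : ((1 : Matrix (Fin m) (Fin m) ℂ) - (O x)ᴴ * O y) ⊗ₖ
      (1 : Matrix (Fin w) (Fin w) ℂ) = 1 - P := by
    rw [sub_kron, one_kronecker_one, hP]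
  have hB : Oxᴴ * ((((1 : Matrix (Fin m) (Fin m) ℂ) - O x * (O y)ᴴ) ⊗ₖ
      (1 : Matrix (Fin w) (Fin w) ℂ)) * Oy) = -(1 - P) := by
    rw [sub_kron, one_kronecker_one, Matrix.sub_mul, Matrix.one_mul, Matrix.mul_sub,
      hOx, hOy, kron_conjTranspose, conjTranspose_one]
    rw [← mul_kronecker_mul, ← mul_kronecker_mul, ← mul_kronecker_mul]
    simp only [Matrix.one_mul, Matrix.mul_one]
    rw [Matrix.mul_assoc (O x) ((O y)ᴴ) (O y), huy, Matrix.mul_one, hux, one_kronecker_one,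
      hP, neg_sub]
  have h1 : e x y = star (u x) ⬝ᵥ ((1 - P) *ᵥ v y) := by rw [he x y, hA]
  have h2 : e x y = star (v x) ⬝ᵥ ((1 - P) *ᵥ u y) := by
    rw [hsym y x, he y x, starRingEnd_apply, ← Matrix.star_dotProduct, star_mulVec,
      ← dotProduct_mulVec]
    congr 1
    rw [kron_conjTranspose, conjTranspose_one, conjTranspose_sub, conjTranspose_one,
      conjTranspose_mul, conjTranspose_conjTranspose, hA]
  have hfx : tv x = Sum.elim ((1/2 : ℂ) • (u x + v x)) ((1/2 : ℂ) • (Ox *ᵥ (u x - v x))) := by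
    rw [htv x]; funext z
    cases z <;> simp [mulVec_sub, smul_eq_mul, mul_add, mul_sub, hOx]
  have hfy : tv y = Sum.elim ((1/2 : ℂ) • (u y + v y)) ((1/2 : ℂ) • (Oy *ᵥ (u y - v y))) := by
    rw [htv y]; funext z
    cases z <;> simp [mulVec_sub, smul_eq_mul, mul_add, mul_sub, hOy]
  have hstar_elim : ∀ (a b : Fin m × Fin w → ℂ),
      star (Sum.elim a b) = Sum.elim (star a) (star b) := by
    intro a b; funext z; cases z <;> simp
  constructor
  · rw [hfx, hfy, fromBlocks_mulVec]
    simp only [Sum.elim_comp_inl, Sum.elim_comp_inr, zero_mulVec, add_zero, zero_add]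
    rw [hstar_elim, sumElim_dotProduct_sumElim]
    rw [mulVec_smul, mulVec_smul, star_smul, star_smul, smul_dotProduct, smul_dotProduct,
      dotProduct_smul, dotProduct_smul, hA]
    rw [mulVec_mulVec, ← mulVec_mulVec, sandwich, hB, neg_mulVec, dotProduct_neg]
    simp only [smul_eq_mul]
    have hc : star (1/2 : ℂ) = (1/2 : ℂ) := by norm_num
    rw [hc]
    simp only [mulVec_add, mulVec_sub, dotProduct_add, dotProduct_sub, star_add, star_sub,
      add_dotProduct, sub_dotProduct]
    linear_combination (1/2 : ℂ) * h1 + (1/2 : ℂ) * h2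
  · rw [hfx]
    rw [Fintype.sum_sum_type]
    simp only [Sum.elim_inl, Sum.elim_inr, Pi.smul_apply, smul_eq_mul, norm_mul, mul_pow]
    have hc : ‖(1/2 : ℂ)‖ = 1/2 := by norm_num
    rw [hc, ← Finset.mul_sum, ← Finset.mul_sum]
    rw [sum_norm_sq_eq_re (u x + v x), sum_norm_sq_eq_re (Ox *ᵥ (u x - v x)),
      sum_norm_sq_eq_re (u x), sum_norm_sq_eq_re (v x), unitary_dot Ox hOxu]
    have par : star (u x + v x) ⬝ᵥ (u x + v x) + star (u x - v x) ⬝ᵥ (u x - v x)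
        = 2 * (star (u x) ⬝ᵥ u x) + 2 * (star (v x) ⬝ᵥ v x) := by
      simp only [star_add, star_sub, add_dotProduct, sub_dotProduct, dotProduct_add,
        dotProduct_sub]
      ring
    have hre := congrArg Complex.re par
    simp only [Complex.add_re, Complex.mul_re, Complex.re_ofNat, Complex.im_ofNat,
      zero_mul, sub_zero] at hre
    norm_num
    linarith
end

section
/- Let $O_x$ ($x \in D$) be unitaries on $\mathcal{M}$ and suppose $\tilde{v}_x \in (\mathcal{M} \oplus \mathcal{M}) \otimes \mathcal{W}$, written as $\tilde{v}_x = \tilde{v}'_x \oplus \tilde{v}''_x$, satisfy $e_{xy} = \langle \tilde{v}'_x, ((I - O_x^*O_y)\otimes I) \tilde{v}'_y \rangle + \langle \tilde{v}''_x, ((I - O_x O_y^*)\otimes I) \tilde{v}''_y \rangle$ for all $x,y \in D$. Define $u_x = \tilde{v}'_x \oplus (O_x^* \otimes I)\tilde{v}''_x$ and $v_x = \tilde{v}'_x \oplus (-(O_x^* \otimes I)\tilde{v}''_x)$. Then $e_{xy} = \langle u_x, ((I - O_x^* O_y) \otimes I) v_y \rangle$ for all $x,y$, and $\|u_x\| =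 \|v_x\| = \|\tilde{v}_x\|$. -/
open Matrix
open scoped Kronecker

lemma kron_conjT {l m n p : Type*} (A : Matrix l m ℂ) (B : Matrix n p ℂ) :
    (A ⊗ₖ B)ᴴ = Aᴴ ⊗ₖ Bᴴ := by
  ext ⟨i, j⟩ ⟨k, l⟩
  simp [conjTranspose_apply, kroneckerMap_apply, mul_comm]

lemma star_sum_elim {α β : Type*} (a : α → ℂ) (b : β → ℂ) :
    star (Sum.elim a b) = Sum.elim (star a) (star b) := by
  ext i; cases i <;> rfl

lemma norm_sum_unitary {n : Type*} [Fintype n] [DecidableEq n]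
    (N : Matrix n n ℂ) (hN : Nᴴ * N = 1) (a : n → ℂ) :
    ∑ i, ‖(N *ᵥ a) i‖ ^ 2 = ∑ i, ‖a i‖ ^ 2 := by
  have key : star (N *ᵥ a) ⬝ᵥ (N *ᵥ a) = star a ⬝ᵥ a := by
    rw [star_mulVec, dotProduct_mulVec, vecMul_vecMul, hN, vecMul_one]
  have h1 : ∀ (wv : n → ℂ), (star wv ⬝ᵥ wv).re = ∑ i, ‖wv i‖ ^ 2 := by
    intro wv
    simp only [dotProduct, Pi.star_apply, Complex.re_sum]
    congr 1; ext i
    simp [Complex.star_def, mul_comm, Complex.mul_conj, Complex.sq_norm]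
  rw [← h1, ← h1, key]

/-- Unidirectional-to-bidirectional conversion of feasible solutions: if
`e x y = ⟨ṽ'ₓ, ((I - Oₓ*O_y) ⊗ I) ṽ'_y⟩ + ⟨ṽ''ₓ, ((I - Oₓ O_y*) ⊗ I) ṽ''_y⟩` with
unitary `Oₓ`, then `u x = ṽ'ₓ ⊕ (Õₓ* ṽ''ₓ)` and `v x = ṽ'ₓ ⊕ (-(Õₓ* ṽ''ₓ))` satisfy
`e x y = ⟨u x, ((I - Oₓ*O_y) ⊗ I) v y⟩` (acting block-diagonally), with
`‖u x‖ = ‖v x‖ = ‖ṽ x‖`. -/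
theorem unidirectional_to_bidirectional
    {D : Type*} [Fintype D] (m w : ℕ)
    (O : D → Matrix (Fin m) (Fin m) ℂ)
    (hO : ∀ x, O x ∈ Matrix.unitaryGroup (Fin m) ℂ)
    (tv' tv'' : D → Fin m × Fin w → ℂ) (e : D → D → ℂ)
    (he : ∀ x y, e x y =
      star (tv' x) ⬝ᵥ ((((1 : Matrix (Fin m) (Fin m) ℂ) - (O x)ᴴ * O y) ⊗ₖ
        (1 : Matrix (Fin w) (Fin w) ℂ)).mulVec (tv' y)) +
      star (tv'' x) ⬝ᵥ ((((1 : Matrix (Fin m) (Fin m) ℂ) - O x * (O y)ᴴ) ⊗ₖ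
        (1 : Matrix (Fin w) (Fin w) ℂ)).mulVec (tv'' y)))
    (u v : D → (Fin m × Fin w) ⊕ (Fin m × Fin w) → ℂ)
    (hu : ∀ x, u x = Sum.elim (tv' x)
      (((O x)ᴴ ⊗ₖ (1 : Matrix (Fin w) (Fin w) ℂ)).mulVec (tv'' x)))
    (hv : ∀ x, v x = Sum.elim (tv' x)
      (-(((O x)ᴴ ⊗ₖ (1 : Matrix (Fin w) (Fin w) ℂ)).mulVec (tv'' x)))) :
    (∀ x y,
      e x y = star (u x) ⬝ᵥ
        ((Matrix.fromBlocks
          (((1 : Matrix (Fin m) (Fin m) ℂ) - (O x)ᴴ * O y) ⊗ₖ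
            (1 : Matrix (Fin w) (Fin w) ℂ)) 0 0
          (((1 : Matrix (Fin m) (Fin m) ℂ) - (O x)ᴴ * O y) ⊗ₖ
            (1 : Matrix (Fin w) (Fin w) ℂ))).mulVec (v y))) ∧
    (∀ x, ∑ i, ‖u x i‖ ^ 2 = ∑ i, ‖tv' x i‖ ^ 2 + ∑ i, ‖tv'' x i‖ ^ 2) ∧
    (∀ x, ∑ i, ‖v x i‖ ^ 2 = ∑ i, ‖tv' x i‖ ^ 2 + ∑ i, ‖tv'' x i‖ ^ 2) := by
  have hOO : ∀ x, O x * (O x)ᴴ = 1 := fun x => by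
    have := (Matrix.mem_unitaryGroup_iff).mp (hO x)
    rwa [← Matrix.star_eq_conjTranspose]
  have hNunit : ∀ x, ((O x)ᴴ ⊗ₖ (1 : Matrix (Fin w) (Fin w) ℂ))ᴴ *
      ((O x)ᴴ ⊗ₖ (1 : Matrix (Fin w) (Fin w) ℂ)) = 1 := fun x => by
    rw [kron_conjT, conjTranspose_conjTranspose, conjTranspose_one,
      ← mul_kronecker_mul, hOO x, one_mul, one_kronecker_one]
  refine ⟨?_, ?_, ?_⟩
  · intro x y
    have hmid : O x * ((1 - (O x)ᴴ * O y) * (O y)ᴴ) = O x * (O y)ᴴ - 1 := by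
      simp [sub_mul, mul_sub, mul_assoc, hOO x, hOO y, Matrix.mul_sub, Matrix.sub_mul,
        Matrix.mul_assoc]
    have hM : (O x ⊗ₖ (1 : Matrix (Fin w) (Fin w) ℂ)) *
        ((((1 : Matrix (Fin m) (Fin m) ℂ) - (O x)ᴴ * O y) ⊗ₖ (1 : Matrix (Fin w) (Fin w) ℂ)) *
          ((O y)ᴴ ⊗ₖ (1 : Matrix (Fin w) (Fin w) ℂ))) =
        -(((1 : Matrix (Fin m) (Fin m) ℂ) - O x * (O y)ᴴ) ⊗ₖ
          (1 : Matrix (Fin w) (Fin w) ℂ)) := by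
      rw [← mul_kronecker_mul, ← mul_kronecker_mul, one_mul, one_mul, hmid,
        sub_kron, sub_kron, neg_sub]
    have h2 : star ((((O x)ᴴ ⊗ₖ (1 : Matrix (Fin w) (Fin w) ℂ)) *ᵥ tv'' x)) ⬝ᵥ
        (((((1 : Matrix (Fin m) (Fin m) ℂ) - (O x)ᴴ * O y) ⊗ₖ (1 : Matrix (Fin w) (Fin w) ℂ)))
          *ᵥ (-(((O y)ᴴ ⊗ₖ (1 : Matrix (Fin w) (Fin w) ℂ)) *ᵥ tv'' y))) =
        star (tv'' x) ⬝ᵥ ((((1 : Matrix (Fin m) (Fin m) ℂ) - O x * (O y)ᴴ) ⊗ₖ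
          (1 : Matrix (Fin w) (Fin w) ℂ)) *ᵥ tv'' y) := by
      conv_lhs => rw [star_mulVec, kron_conjT, conjTranspose_conjTranspose, conjTranspose_one,
        Matrix.mulVec_neg, Matrix.mulVec_mulVec, dotProduct_neg, dotProduct_mulVec,
        vecMul_vecMul, ← dotProduct_mulVec, hM, Matrix.neg_mulVec, dotProduct_neg, neg_neg]
    rw [he, hu, hv, fromBlocks_mulVec]
    simp only [Sum.elim_comp_inl, Sum.elim_comp_inr, Matrix.zero_mulVec, add_zero, zero_add,
      star_sum_elim, sumElim_dotProduct_sumElim]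
    rw [h2]
  · intro x
    rw [hu, Fintype.sum_sum_type]
    simp only [Sum.elim_inl, Sum.elim_inr]
    rw [norm_sum_unitary _ (hNunit x)]
  · intro x
    rw [hv, Fintype.sum_sum_type]
    simp only [Sum.elim_inl, Sum.elim_inr, Pi.neg_apply, norm_neg]
    rw [norm_sum_unitary _ (hNunit x)]
end

section
/- Let $D$ be a finite set, and for $x,y \in D$ let $\Delta_{xy} : \mathcal{M} \to \mathcal{M}$ be linear maps satisfying $\Delta_{xy} = \Delta_{yx}^*$ and $\Delta_{xx} = 0$. Let $(e_{xy})_{x,y \in D}$ be complex numbers with $e_{yx} = \overline{e_{xy}}$ and $e_{xy} = 0$ whenever $\Delta_{xy} = 0$. Then there exist a finite-dimensional space $\mathcal{W}$ and vectors $v_x \in \mathcal{M} \otimes \mathcal{W}$ such that $e_{xy} = \langle v_x, (\Delta_{xy} \otimes I_{\mathcal{W}}) v_y \rangle$ for all $x, y \in D$. -/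
set_option maxRecDepth 4000
open Matrix
open scoped Kronecker


namespace OnegammaAux

lemma exNZ {m : ℕ} {A : Matrix (Fin m) (Fin m) ℂ} (h : A ≠ 0) :
    ∃ p : Fin m × Fin m, A p.1 p.2 ≠ 0 := by
  by_contra hc
  push_neg at hc
  exact h (by ext i j; simpa using hc (i, j))

noncomputable def pickUW {m : ℕ} (A : Matrix (Fin m) (Fin m) ℂ) :
    (Fin m → ℂ) × (Fin m → ℂ) :=
  if h : A = 0 then (0, 0)
  else
    ((1/2 : ℂ) • (Pi.single (exNZ h).choose.1 (1 : ℂ) : Fin m → ℂ),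
     (A (exNZ h).choose.1 (exNZ h).choose.2)⁻¹ • (Pi.single (exNZ h).choose.2 (1 : ℂ) : Fin m → ℂ))

lemma pickUW_zero {m : ℕ} : pickUW (0 : Matrix (Fin m) (Fin m) ℂ) = (0, 0) := by
  simp [pickUW]

lemma pick1 {m : ℕ} (A : Matrix (Fin m) (Fin m) ℂ) :
    star (pickUW A).1 ⬝ᵥ A.mulVec (pickUW A).2 = if A = 0 then 0 else 1/2 := by
  rw [pickUW]
  split_ifs with h
  · simp
  · have hps := (exNZ h).choose_spec
    simp only [star_smul, smul_dotProduct, mulVec_smul, dotProduct_smul, mulVec_single]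
    simp [dotProduct, Pi.single_apply, apply_ite, mul_ite, ite_mul, Finset.sum_ite_eq,
      starRingEnd_apply]
    field_simp

lemma pick2 {m : ℕ} (A : Matrix (Fin m) (Fin m) ℂ) :
    star (pickUW A).2 ⬝ᵥ Aᴴ.mulVec (pickUW A).1 = if A = 0 then 0 else 1/2 := by
  rw [pickUW]
  split_ifs with h
  · simp
  · have hps := (exNZ h).choose_spec
    simp only [star_smul, smul_dotProduct, mulVec_smul, dotProduct_smul, mulVec_single]
    simp only [dotProduct, Pi.smul_apply, Pi.star_apply, smul_eq_mul, Pi.single_apply,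
      conjTranspose_apply, mul_ite, ite_mul, mul_zero, zero_mul, mul_one, one_mul,
      apply_ite (star : ℂ → ℂ), star_zero, Finset.sum_ite_eq, Finset.sum_ite_eq',
      Finset.mem_univ, if_true, star_one, one_mul, mul_one]
    simp only [Matrix.col_apply, conjTranspose_apply, MulOpposite.op_one, one_smul]
    rw [← star_mul', inv_mul_cancel₀ hps]
    simp

end OnegammaAux

/-- Feasibility of the unidirectional relative γ₂ optimisation problem: if
`Δ x y = (Δ y x)*`, `Δ x x = 0`, `e y x = conj (e x y)` and `e x y = 0` whenever
`Δ x y = 0`, then there exist a space `W` and vectors `v x ∈ M ⊗ W` with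
`e x y = ⟨v x, (Δ x y ⊗ I_W) (v y)⟩` for all `x, y`. -/
theorem onegamma_feasible
    {D : Type*} [Fintype D] [DecidableEq D] (m : ℕ)
    (Δ : D → D → Matrix (Fin m) (Fin m) ℂ)
    (hΔsym : ∀ x y, Δ x y = (Δ y x)ᴴ)
    (hΔdiag : ∀ x, Δ x x = 0)
    (e : D → D → ℂ)
    (hesym : ∀ x y, e y x = starRingEnd ℂ (e x y))
    (hezero : ∀ x y, Δ x y = 0 → e x y = 0) :
    ∃ (wdim : ℕ) (v : D → Fin m × Fin wdim → ℂ),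
      ∀ x y, e x y = star (v x) ⬝ᵥ
        ((Δ x y ⊗ₖ (1 : Matrix (Fin wdim) (Fin wdim) ℂ)).mulVec (v y)) := by
  classical
  set n := Fintype.card (D × D) with hn
  set σ : Fin n ≃ D × D := (Fintype.equivFin (D × D)).symm with hσ
  set V : D → D × D → (Fin m → ℂ) := fun x pq =>
    (if x = pq.1 then (OnegammaAux.pickUW (Δ pq.1 pq.2)).1 else 0)
    + (if x = pq.2 then e pq.1 pq.2 • (OnegammaAux.pickUW (Δ pq.1 pq.2)).2 else 0) with hV
  have hexx : ∀ z, e z z = 0 := fun z => hezero z z (hΔdiag z)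
  have hUval : ∀ p q, e p q *
      (star (OnegammaAux.pickUW (Δ p q)).1 ⬝ᵥ
        (Δ p q).mulVec (OnegammaAux.pickUW (Δ p q)).2) = e p q / 2 := by
    intro p q
    rw [OnegammaAux.pick1]
    split_ifs with h
    · rw [hezero p q h]; ring
    · ring
  have hWval : ∀ p q, star (e p q) *
      (star (OnegammaAux.pickUW (Δ p q)).2 ⬝ᵥ
        (Δ q p).mulVec (OnegammaAux.pickUW (Δ p q)).1) = e q p / 2 := by
    intro p q
    rw [hΔsym q p, OnegammaAux.pick2]
    split_ifs with h
    · rw [hesym p q, hezero p q h]; simp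
    · rw [hesym p q, starRingEnd_apply]; ring
  refine ⟨n, fun x a => V x (σ a.2) a.1, fun x y => ?_⟩
  have key : star (fun a : Fin m × Fin n => V x (σ a.2) a.1) ⬝ᵥ
      ((Δ x y ⊗ₖ (1 : Matrix (Fin n) (Fin n) ℂ)).mulVec
        (fun a : Fin m × Fin n => V y (σ a.2) a.1))
      = ∑ k : Fin n, star (V x (σ k)) ⬝ᵥ (Δ x y).mulVec (V y (σ k)) := by
    simp only [dotProduct, mulVec, kroneckerMap_apply, Matrix.one_apply, Pi.star_apply,
      Fintype.sum_prod_type]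
    simp only [mul_ite, mul_one, mul_zero, ite_mul, zero_mul, Finset.sum_ite_eq,
      Finset.mem_univ, if_true]
    rw [Finset.sum_comm]
  have claim : ∀ pq : D × D, star (V x pq) ⬝ᵥ (Δ x y).mulVec (V y pq)
      = (if pq = (x, y) then e x y / 2 else 0) + (if pq = (y, x) then e x y / 2 else 0) := by
    rintro ⟨p, q⟩
    simp only [hV]
    by_cases hxy : x = y
    · subst hxy
      simp [hΔdiag, hexx, zero_mulVec, dotProduct_zero]
    · rw [star_add, add_dotProduct, mulVec_add, dotProduct_add, dotProduct_add]
      clear hesym hΔsym hezero key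
      clear hσ hn hV
      clear σ V n
      split_ifs <;> subst_vars <;>
        simp_all only [star_smul, smul_dotProduct, mulVec_smul, dotProduct_smul, smul_eq_mul,
          mulVec_zero, zero_mulVec, dotProduct_zero, zero_dotProduct, star_zero, hΔdiag,
          OnegammaAux.pickUW_zero, hexx, hUval, hWval, add_zero, zero_add, mul_zero, zero_mul,
          zero_div, not_true_eq_false, Prod.mk.injEq, and_self, and_true, true_and, and_false,
          false_and, not_false_eq_true]
  rw [key, Equiv.sum_comp σ (fun pq => star (V x pq) ⬝ᵥ (Δ x y).mulVec (V y pq)),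
    Finset.sum_congr rfl fun pq _ => claim pq]
  simp [Finset.sum_add_distrib, Finset.sum_ite_eq', Finset.mem_univ]
end
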